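/- arXiv:2406.06430 — 6 statements merged into one kernel-verified Lean document; each statement's English description precedes it below -/
import Mathlib

section
/- Let A be an abelian group and let B, C ≤ A be subgroups with B ∩ C = {0}. Let f : B → A be a group homomorphism with f(B) ⊆ B + C, and let π : B + C → B be the projection with kernel C determined by the internal direct sum decomposition of B + C. If the endomorphism π ∘ f of B is nilpotent (some iterate (π∘f)^n is the zero map), then the map B × C → B + C given by (x, y) ↦ f(x) − x + y is a bijection. -/
/-- Lemma 6.3 ('cross'), abstract form.  Let `A` be an abelian group, `B, C ≤ A` subgroups
with `B ∩ C = {0}`, `f : B → A` a homomorphism with `f(B) ⊆ B + C`, and `π : B + C → B` the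
projection with kernel `C` coming from the internal direct sum decomposition of `B + C`.
If `π ∘ f` is a nilpotent endomorphism of `B`, then `(x, y) ↦ f(x) − x + y` is a bijection
from `B × C` onto `B + C`. -/
theorem cross_bijection
    {A : Type*} [AddCommGroup A] (B C : AddSubgroup A)
    (hBC : B ⊓ C = ⊥)
    (f : B →+ A) (hf : ∀ x : B, f x ∈ B ⊔ C)
    (π : (B ⊔ C : AddSubgroup A) →+ B)
    (hπ : ∀ (b : B) (c : C),
      π ⟨(b : A) + (c : A),
        AddSubgroup.add_mem _ (AddSubgroup.mem_sup_left b.2) (AddSubgroup.mem_sup_right c.2)⟩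
        = b)
    (hnil : ∃ n : ℕ, ∀ x : B, ((fun y : B => π ⟨f y, hf y⟩)^[n]) x = 0) :
    Function.Injective (fun p : B × C => f p.1 - (p.1 : A) + (p.2 : A)) ∧
      Set.range (fun p : B × C => f p.1 - (p.1 : A) + (p.2 : A)) = ↑(B ⊔ C) := by
  obtain ⟨n, hn⟩ := hnil
  set G : B →+ B :=
    { toFun := fun y : B => π ⟨f y, hf y⟩
      map_zero' := by
        show π ⟨f 0, hf 0⟩ = 0
        have : (⟨f 0, hf 0⟩ : (B ⊔ C : AddSubgroup A)) = 0 := by ext; simp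
        rw [this, map_zero]
      map_add' := by
        intro x y
        have : (⟨f (x + y), hf (x + y)⟩ : (B ⊔ C : AddSubgroup A))
            = ⟨f x, hf x⟩ + ⟨f y, hf y⟩ := by ext; simp
        show π ⟨f (x + y), hf (x + y)⟩ = π ⟨f x, hf x⟩ + π ⟨f y, hf y⟩
        rw [this, map_add] } with hG
  have hGfun : (fun y : B => π ⟨f y, hf y⟩) = ⇑G := rfl
  rw [hGfun] at hn
  have hπB : ∀ b : B, π ⟨(b : A), AddSubgroup.mem_sup_left b.2⟩ = b := by
    intro b; have := hπ b 0; simpa using this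
  have hπC : ∀ c : C, π ⟨(c : A), AddSubgroup.mem_sup_right c.2⟩ = 0 := by
    intro c; have := hπ 0 c; simpa using this
  have hmem : ∀ (x : B) (y : C), f x - (x : A) + (y : A) ∈ B ⊔ C := fun x y =>
    AddSubgroup.add_mem _ (AddSubgroup.sub_mem _ (hf x) (AddSubgroup.mem_sup_left x.2))
      (AddSubgroup.mem_sup_right y.2)
  have hπval : ∀ (x : B) (y : C) (h : f x - (x : A) + (y : A) ∈ B ⊔ C),
      π ⟨f x - (x : A) + (y : A), h⟩ = G x - x := by
    intro x y h
    have : (⟨f x - (x : A) + (y : A), h⟩ : (B ⊔ C : AddSubgroup A))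
        = ⟨f x, hf x⟩ - ⟨(x : A), AddSubgroup.mem_sup_left x.2⟩
          + ⟨(y : A), AddSubgroup.mem_sup_right y.2⟩ := by
      ext; simp
    rw [this, map_add, map_sub, hπB, hπC, add_zero]
    rfl
  have hGinj : ∀ d : B, G d = d → d = 0 := by
    intro d hd
    have key : ∀ m : ℕ, (⇑G)^[m] d = d := by
      intro m
      induction m with
      | zero => rfl
      | succ k ih => rw [Function.iterate_succ_apply', ih, hd]
    have := hn d
    rw [key n] at this
    exact this
  have hker : ∀ w : (B ⊔ C : AddSubgroup A), (w : A) - (π w : A) ∈ C := by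
    intro w
    obtain ⟨b', hb', c', hc', hbc⟩ := AddSubgroup.mem_sup.mp w.2
    have hw : w = ⟨((⟨b', hb'⟩ : B) : A) + ((⟨c', hc'⟩ : C) : A),
        AddSubgroup.add_mem _ (AddSubgroup.mem_sup_left hb') (AddSubgroup.mem_sup_right hc')⟩ := by
      ext; exact hbc.symm
    rw [hw, hπ]
    simpa using hc'
  constructor
  · rintro ⟨x₁, y₁⟩ ⟨x₂, y₂⟩ heq
    simp only at heq
    have h1 : (⟨f x₁ - (x₁ : A) + (y₁ : A), hmem x₁ y₁⟩ : (B ⊔ C : AddSubgroup A))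
        = ⟨f x₂ - (x₂ : A) + (y₂ : A), hmem x₂ y₂⟩ := by
      ext; exact heq
    have h2 : G x₁ - x₁ = G x₂ - x₂ := by
      rw [← hπval x₁ y₁ (hmem x₁ y₁), ← hπval x₂ y₂ (hmem x₂ y₂), h1]
    have hd : G (x₁ - x₂) = x₁ - x₂ := by
      rw [map_sub]
      have := sub_eq_sub_iff_sub_eq_sub.mp h2
      exact this
    have hx : x₁ = x₂ := sub_eq_zero.mp (hGinj _ hd)
    have hy : (y₁ : A) = (y₂ : A) := by
      rw [hx] at heq
      exact add_left_cancel heq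
    exact Prod.ext hx (Subtype.ext hy)
  · ext z
    simp only [Set.mem_range, SetLike.mem_coe]
    constructor
    · rintro ⟨⟨x, y⟩, rfl⟩
      exact hmem x y
    · intro hz
      set b : B := π ⟨z, hz⟩ with hb
      set x : B := -(∑ k ∈ Finset.range n, (⇑G)^[k] b) with hx
      have hGx : G x - x = b := by
        have hsum : (∑ k ∈ Finset.range n, (⇑G)^[k] b)
            - G (∑ k ∈ Finset.range n, (⇑G)^[k] b) = b := by
          rw [map_sum, ← Finset.sum_sub_distrib]
          have : ∀ k ∈ Finset.range n, (⇑G)^[k] b - G ((⇑G)^[k] b)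
              = (⇑G)^[k] b - (⇑G)^[k+1] b := by
            intro k _
            rw [Function.iterate_succ_apply']
          rw [Finset.sum_congr rfl this, Finset.sum_range_sub']
          simp [hn b]
        rw [hx, map_neg, neg_sub_neg]
        exact hsum
      -- the C-component
      have hzmem : z - (f x - (x : A)) ∈ B ⊔ C :=
        AddSubgroup.sub_mem _ hz
          (AddSubgroup.sub_mem _ (hf x) (AddSubgroup.mem_sup_left x.2))
      have hπw : π ⟨z - (f x - (x : A)), hzmem⟩ = 0 := by
        have : (⟨z - (f x - (x : A)), hzmem⟩ : (B ⊔ C : AddSubgroup A))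
            = ⟨z, hz⟩ - (⟨f x, hf x⟩ - ⟨(x : A), AddSubgroup.mem_sup_left x.2⟩) := by
          ext; simp
        rw [this, map_sub, map_sub, hπB]
        have : π ⟨f x, hf x⟩ = G x := rfl
        rw [this, hGx, ← hb, sub_self]
      have hyC : z - (f x - (x : A)) ∈ C := by
        have := hker ⟨z - (f x - (x : A)), hzmem⟩
        rw [hπw] at this
        simpa using this
      refine ⟨⟨x, ⟨z - (f x - (x : A)), hyC⟩⟩, ?_⟩
      simp
end

section
/- Let A be an abelian group, F : A → A a group endomorphism, and B, C ≤ A subgroups. For a subset S ⊆ A write Y_S = {g ∈ A : F(g) − g ∈ S}. Assume that the map B × C → A given by (x, y) ↦ y + F(x) − x is injective, and let M ⊆ A be its image. Then the map B × Y_C → Y_M given by (x, z) ↦ x + z is a bijection. -/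
/-- Proposition 6.5 ('flat'), abstract form.  Let `A` be an abelian group, `F : A → A` an
endomorphism, and `B, C ≤ A` subgroups.  For `S ⊆ A` write `Y_S = {g ∈ A : F(g) − g ∈ S}`.
If the map `B × C → A`, `(x, y) ↦ y + F(x) − x`, is injective with image `M`, then the
addition map `(x, z) ↦ x + z` is a bijection from `B × Y_C` onto `Y_M`. -/
theorem flat_bijection
    {A : Type*} [AddCommGroup A] (F : A →+ A) (B C : AddSubgroup A)
    (hinj : Function.Injective (fun p : B × C => (p.2 : A) + F p.1 - (p.1 : A))) :
    Set.BijOn (fun p : A × A => p.1 + p.2)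
      ((B : Set A) ×ˢ {g : A | F g - g ∈ (C : Set A)})
      {g : A | F g - g ∈ Set.range (fun p : B × C => (p.2 : A) + F p.1 - (p.1 : A))} := by
  refine ⟨?_, ?_, ?_⟩
  · rintro ⟨x, z⟩ ⟨hx, hz⟩
    exact ⟨(⟨x, hx⟩, ⟨F z - z, hz⟩), by simp; abel⟩
  · rintro ⟨x, z⟩ ⟨hx, hz⟩ ⟨x', z'⟩ ⟨hx', hz'⟩ h
    simp only at h hx hz hx' hz'
    have key : (fun p : B × C => (p.2 : A) + F p.1 - (p.1 : A))
        (⟨x, hx⟩, ⟨F z - z, hz⟩) =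
        (fun p : B × C => (p.2 : A) + F p.1 - (p.1 : A)) (⟨x', hx'⟩, ⟨F z' - z', hz'⟩) := by
      simp only
      have : F (x + z) - (x + z) = F (x' + z') - (x' + z') := by rw [h]
      simp only [map_add] at this
      have e : F z - z + F x - x = F z' - z' + F x' - x' := by
        rw [show F z - z + F x - x = F x + F z - (x + z) by abel,
            show F z' - z' + F x' - x' = F x' + F z' - (x' + z') by abel]
        exact this
      exact e
    have := hinj key
    have hxx : x = x' := congrArg (fun q => ((q.1 : B) : A)) this
    have hzz : z = z' := by
      have h' : x + z = x' + z' := h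
      rw [hxx] at h'
      exact add_left_cancel h'
    exact Prod.ext hxx hzz
  · rintro g hg
    obtain ⟨⟨⟨x, hx⟩, ⟨y, hy⟩⟩, hp⟩ := hg
    refine ⟨(x, g - x), ⟨hx, ?_⟩, by simp⟩
    simp only [Set.mem_setOf_eq, map_sub]
    have : F g - g = y + F x - x := hp.symm
    have : F g - F x - (g - x) = y := by rw [show F g - F x - (g - x) = F g - g - (F x - x) by abel, this]; abel
    rw [this]; exact hy
end

section
/- Let K be a finite group and H ⊴ K a normal subgroup. Let V be a finite-dimensional complex representation of K whose restriction to H is irreducible, and let W, W' be irreducible finite-dimensional complex representations of K on which H acts trivially. If V ⊗ W ≅ V ⊗ W' as representations of K, then W ≅ W' as representations of K. -/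
open TensorProduct

/-- A representation is irreducible if the underlying space is nontrivial and the only
invariant subspaces are `⊥` and `⊤`. -/
def IsIrredRep {k G V : Type*} [Field k] [Group G] [AddCommGroup V] [Module k V]
    (ρ : Representation k G V) : Prop :=
  Nontrivial V ∧ ∀ p : Submodule k V, (∀ g : G, ∀ v ∈ p, ρ g v ∈ p) → p = ⊥ ∨ p = ⊤

/-- Two representations are isomorphic if there is an equivariant linear equivalence. -/
def RepIso {k G V W : Type*} [Field k] [Group G] [AddCommGroup V] [Module k V]
    [AddCommGroup W] [Module k W]
    (ρ : Representation k G V) (σ : Representation k G W) : Prop :=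
  ∃ e : V ≃ₗ[k] W, ∀ (g : G) (v : V), e (ρ g v) = σ g (e v)

noncomputable section
open CategoryTheory Module Representation LinearMap

namespace TCaux

variable {k G V : Type u} [Field k] [Group G] [AddCommGroup V] [Module k V]

/-- Restriction of a representation to an invariant submodule. -/
def subRep (ρ : Representation k G V) (N : Submodule k V)
    (hN : ∀ g : G, ∀ v ∈ N, ρ g v ∈ N) : Representation k G N :=
  { toFun := fun g => (ρ g).restrict (fun v hv => hN g v hv)
    map_one' := by ext x; simp [LinearMap.restrict_apply]
    map_mul' := fun g h => by
      ext x; simp [LinearMap.restrict_apply, Module.End.mul_apply] }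

theorem simple_of_isIrredRep [FiniteDimensional k V] (ρ : Representation k G V)
    (h : IsIrredRep ρ) : Simple (FDRep.of ρ) := by
  obtain ⟨hnt, hsub⟩ := h
  constructor
  intro Y f hf
  constructor
  · rintro hiso rfl
    have h1 : (𝟙 (FDRep.of ρ)) = (inv (0 : Y ⟶ FDRep.of ρ)) ≫ (0 : Y ⟶ FDRep.of ρ) :=
      (IsIso.inv_hom_id _).symm
    obtain ⟨x, y, hxy⟩ := hnt
    have hx : ∀ v : V, v = 0 := by
      intro v
      have := congrArg (fun (q : FDRep.of ρ ⟶ FDRep.of ρ) => q.hom.hom.hom v) h1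
      simpa using this
    exact hxy ((hx x).trans (hx y).symm)
  · intro hfne
    have hc : ∀ (g : G) (y : Y), f.hom (Y.ρ g y) = ρ g (f.hom y) := by
      intro g y
      exact (congrArg (fun (q : Y.V ⟶ (FDRep.of ρ).V) => q.hom.hom y) (f.comm g) :)
    have hne : (f.hom.hom.hom : Y →ₗ[k] V) ≠ 0 := by
      intro h0
      apply hfne
      ext y
      exact LinearMap.congr_fun h0 y
    have hrange : ∀ g : G, ∀ v ∈ LinearMap.range (f.hom.hom.hom : Y →ₗ[k] V),
        ρ g v ∈ LinearMap.range (f.hom.hom.hom : Y →ₗ[k] V) := by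
      rintro g v ⟨y, rfl⟩
      exact ⟨Y.ρ g y, hc g y⟩
    have hrt : LinearMap.range (f.hom.hom.hom : Y →ₗ[k] V) = ⊤ := by
      rcases hsub _ hrange with hb | ht
      · exfalso
        apply hne
        ext y
        have : f.hom y ∈ LinearMap.range (f.hom.hom.hom : Y →ₗ[k] V) := ⟨y, rfl⟩
        rw [hb] at this
        simp at this; exact this
      · exact ht
    have hsurj : Function.Surjective (f.hom.hom.hom : Y →ₗ[k] V) :=
      LinearMap.range_eq_top.mp hrt
    -- injectivity via Mono
    set N : Submodule k Y := LinearMap.ker (f.hom.hom.hom : Y →ₗ[k] V) with hNdef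
    have hNinv : ∀ g : G, ∀ v ∈ N, Y.ρ g v ∈ N := by
      intro g v hv
      simp only [hNdef, LinearMap.mem_ker] at hv ⊢
      exact (hc g v).trans ((congrArg (fun x => ρ g x) hv).trans (map_zero _))
    let Z : FDRep k G := FDRep.of (subRep Y.ρ N hNinv)
    let ι : Z ⟶ Y := ⟨ConcreteCategory.ofHom N.subtype, fun g => by ext x; rfl⟩
    have hι0 : ι ≫ f = 0 := by
      ext x
      simp; exact x.2
    have hι : ι = 0 := by
      rw [← cancel_mono f, hι0, Limits.zero_comp]
    have hNbot : N = ⊥ := by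
      rw [Submodule.eq_bot_iff]
      intro x hx
      have := congrArg (fun (q : Z ⟶ Y) => q.hom.hom.hom ⟨x, hx⟩) hι
      simp at this; exact this
    have hinj : Function.Injective (f.hom.hom.hom : Y →ₗ[k] V) := by
      rw [← LinearMap.ker_eq_bot]
      exact hNbot
    let e : (Y : Type u) ≃ₗ[k] V := LinearEquiv.ofBijective (f.hom.hom.hom : Y →ₗ[k] V) ⟨hinj, hsurj⟩
    have hfe : ∀ y : Y, e y = f.hom y := fun y => rfl
    let ginv : FDRep.of ρ ⟶ Y := ⟨ConcreteCategory.ofHom (e.symm : V →ₗ[k] Y), by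
      intro g
      ext v
      apply hinj
      show f.hom (e.symm (ρ g v)) = f.hom (Y.ρ g (e.symm v))
      rw [hc]
      have h1 : ∀ x : V, f.hom (e.symm x) = x := fun x => e.apply_symm_apply x
      rw [h1, h1]⟩
    refine ⟨⟨ginv, ?_, ?_⟩⟩
    · ext y
      show e.symm (f.hom y) = y
      rw [← hfe]
      exact e.symm_apply_apply y
    · ext v
      show f.hom (e.symm v) = v
      exact e.apply_symm_apply v


section Coset

variable {k G V : Type u} [Field k] [Group G] [AddCommGroup V] [Module k V]
  [FiniteDimensional k V] [IsAlgClosed k]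

theorem coset_sum (H : Subgroup G) [Fintype H] [Invertible (Fintype.card H : k)]
    (ρ : Representation k G V) (hV : IsIrredRep (ρ.comp H.subtype)) (g : G) :
    ∑ h : H, trace k V (ρ (g * h)) * trace k V (ρ (g * (h : G))⁻¹) =
      (Fintype.card H : k) := by
  haveI : Nontrivial V := hV.1
  set τ : Representation k G (V →ₗ[k] V) := linHom ρ ρ with hτ
  set τH : Representation k ↥H (V →ₗ[k] V) := τ.comp H.subtype with hτH
  -- the trace of `τ x` is the product of traces
  have hχ : ∀ x : G, trace k (V →ₗ[k] V) (τ x) = trace k V (ρ x⁻¹) * trace k V (ρ x) :=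
    fun x => FDRep.char_linHom (FDRep.of ρ) (FDRep.of ρ) x
  -- the invariants of τH are 1-dimensional
  haveI : Simple (FDRep.of (ρ.comp H.subtype)) := simple_of_isIrredRep _ hV
  have hfin : finrank k (invariants τH) = 1 := by
    have h1 := (linHom.invariantsEquivFDRepHom (G := ↥H)
      (FDRep.of (ρ.comp H.subtype)) (FDRep.of (ρ.comp H.subtype))).finrank_eq
    have h2 := FDRep.finrank_hom_simple_simple (G := ↥H)
      (FDRep.of (ρ.comp H.subtype)) (FDRep.of (ρ.comp H.subtype))
    rw [if_pos ⟨Iso.refl _⟩] at h2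
    exact h1.trans h2
  have hinv : ∀ (x : G) (v : V), ρ x ((ρ x⁻¹) v) = v := fun x v => by
    rw [← Module.End.mul_apply, ← map_mul, mul_inv_cancel, map_one, Module.End.one_apply]
  -- `LinearMap.id` is an invariant of τH
  have hid : LinearMap.id ∈ invariants τH := by
    intro h
    ext v
    simp [hτH, hτ, linHom_apply, hinv]
  have hidne : (⟨LinearMap.id, hid⟩ : invariants τH) ≠ 0 := by
    intro h0
    obtain ⟨x, y, hxy⟩ := ‹Nontrivial V›
    have : (LinearMap.id : V →ₗ[k] V) = 0 := congrArg Subtype.val h0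
    exact hxy ((LinearMap.congr_fun this x).trans (LinearMap.congr_fun this y).symm)
  -- every invariant is fixed by every τ g
  have hfix : ∀ f ∈ invariants τH, τ g f = f := by
    intro f hf
    obtain ⟨c, hc⟩ := (finrank_eq_one_iff_of_nonzero' (⟨LinearMap.id, hid⟩ : invariants τH)
      hidne).mp hfin ⟨f, hf⟩
    have hc' : c • (LinearMap.id : V →ₗ[k] V) = f := congrArg Subtype.val hc
    have hgid : τ g LinearMap.id = LinearMap.id := by
      ext v; simp [hτ, linHom_apply, hinv]
    rw [← hc', map_smul, hgid]
  set P : (V →ₗ[k] V) →ₗ[k] (V →ₗ[k] V) := averageMap τH with hP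
  have havg : (∑ h : ↥H, τH h) = (Fintype.card ↥H : k) • P := by
    rw [hP, averageMap, GroupAlgebra.average, map_smul, map_sum]
    simp only [MonoidAlgebra.of_apply, asAlgebraHom_single, one_smul]
    rw [smul_smul, mul_invOf_self, one_smul]
  have hPfix : τ g * P = P := by
    refine LinearMap.ext fun x => ?_
    exact hfix (P x) (averageMap_invariant τH x)
  have htrP : trace k (V →ₗ[k] V) P = 1 := by
    rw [(isProj_averageMap τH).trace, hfin, Nat.cast_one]
  calc ∑ h : H, trace k V (ρ (g * h)) * trace k V (ρ (g * (h : G))⁻¹)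
      = ∑ h : H, trace k (V →ₗ[k] V) (τ (g * h)) := by
        refine Finset.sum_congr rfl fun h _ => ?_
        rw [hχ, mul_comm]
    _ = trace k (V →ₗ[k] V) (τ g * ∑ h : ↥H, τH h) := by
        rw [Finset.mul_sum, map_sum]
        refine Finset.sum_congr rfl fun h _ => ?_
        rw [map_mul τ g (h : G)]
        rfl
    _ = (Fintype.card H : k) := by
        rw [havg, mul_smul_comm, map_smul, hPfix, htrP, smul_eq_mul, mul_one]

end Coset

section Core

theorem core {k K V W W' : Type u} [Field k] [IsAlgClosed k] [CharZero k]
    [Group K] [Fintype K] (H : Subgroup K)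
    [AddCommGroup V] [Module k V] [FiniteDimensional k V]
    [AddCommGroup W] [Module k W] [FiniteDimensional k W]
    [AddCommGroup W'] [Module k W'] [FiniteDimensional k W']
    (ρV : Representation k K V) (ρW : Representation k K W) (ρW' : Representation k K W')
    (hV : IsIrredRep (ρV.comp H.subtype))
    (hW : IsIrredRep ρW) (hW' : IsIrredRep ρW')
    (htrivW : ∀ h ∈ H, ρW h = LinearMap.id)
    (htrivW' : ∀ h ∈ H, ρW' h = LinearMap.id)
    (hiso : RepIso (ρV.tprod ρW) (ρV.tprod ρW')) :
    RepIso ρW ρW' := by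
  classical
  haveI : Fintype ↥H := Fintype.ofFinite ↥H
  haveI : Invertible (Fintype.card K : k) :=
    invertibleOfNonzero (Nat.cast_ne_zero.mpr Fintype.card_ne_zero)
  haveI : Invertible (Nat.card K : k) :=
    invertibleOfNonzero (Nat.cast_ne_zero.mpr Nat.card_pos.ne')
  haveI : Invertible (Fintype.card ↥H : k) :=
    invertibleOfNonzero (Nat.cast_ne_zero.mpr Fintype.card_ne_zero)
  set X : FDRep k K := FDRep.of ρV with hX
  set Y : FDRep k K := FDRep.of ρW with hY
  set Y' : FDRep k K := FDRep.of ρW' with hY'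
  haveI : Simple Y := simple_of_isIrredRep _ hW
  haveI : Simple Y' := simple_of_isIrredRep _ hW'
  -- Step 1 : character equality from the tensor isomorphism
  have step1 : ∀ g : K, trace k V (ρV g) * trace k W (ρW g)
      = trace k V (ρV g) * trace k W' (ρW' g) := by
    obtain ⟨e, he⟩ := hiso
    intro g
    have hσ : (ρV.tprod ρW') g = e.conj ((ρV.tprod ρW) g) := by
      refine LinearMap.ext fun x => ?_
      rw [LinearEquiv.conj_apply]
      simp only [LinearMap.comp_apply, LinearEquiv.coe_coe]
      rw [he g (e.symm x), LinearEquiv.apply_symm_apply]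
    have h1 : trace k (V ⊗[k] W') ((ρV.tprod ρW') g)
        = trace k (V ⊗[k] W) ((ρV.tprod ρW) g) := by
      rw [hσ]; exact trace_conj' _ _
    have h2 : trace k (V ⊗[k] W) ((ρV.tprod ρW) g)
        = trace k V (ρV g) * trace k W (ρW g) := trace_tensorProduct' _ _
    have h3 : trace k (V ⊗[k] W') ((ρV.tprod ρW') g)
        = trace k V (ρV g) * trace k W' (ρW' g) := trace_tensorProduct' _ _
    rw [← h2, ← h3, h1]
  -- class-function property on cosets of H
  have hWc : ∀ (g : K) (h : ↥H), trace k W (ρW (g * h)) = trace k W (ρW g) := by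
    intro g h
    rw [map_mul, htrivW (h : K) h.2, ← Module.End.one_eq_id, mul_one]
  have hW'c : ∀ (g : K) (h : ↥H),
      trace k W' (ρW' (g * (h : K))⁻¹) = trace k W' (ρW' g⁻¹) := by
    intro g h
    rw [mul_inv_rev, map_mul, htrivW' ((h : K)⁻¹) (inv_mem h.2), ← Module.End.one_eq_id, one_mul]
  set F : K → k := fun g => (trace k V (ρV g) * trace k W (ρW g)) *
    (trace k V (ρV g⁻¹) * trace k W' (ρW' g⁻¹)) with hF
  -- Step 2 : coset summation
  have claim2 : ∀ g : K, ∑ h : ↥H, F (g * h)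
      = (Fintype.card ↥H : k) * (trace k W (ρW g) * trace k W' (ρW' g⁻¹)) := by
    intro g
    have : ∀ h : ↥H, F (g * h) = (trace k W (ρW g) * trace k W' (ρW' g⁻¹)) *
        (trace k V (ρV (g * h)) * trace k V (ρV (g * (h : K))⁻¹)) := by
      intro h
      rw [hF]
      simp only
      rw [hWc g h, hW'c g h]
      ring
    rw [Finset.sum_congr rfl (fun h _ => this h), ← Finset.mul_sum,
      coset_sum H ρV hV g]
    ring
  have claim1 : (Fintype.card ↥H : k) * ∑ g : K, F g = ∑ g : K, ∑ h : ↥H, F (g * h) := by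
    rw [Finset.sum_comm]
    have : ∀ h : ↥H, ∑ g : K, F (g * h) = ∑ g : K, F g := by
      intro h
      exact Fintype.sum_equiv (Equiv.mulRight (h : K)) _ _ (fun g => rfl)
    rw [Finset.sum_congr rfl (fun h _ => this h), Finset.sum_const, Finset.card_univ,
      nsmul_eq_mul]
  have step3 : ∑ g : K, F g = ∑ g : K, trace k W (ρW g) * trace k W' (ρW' g⁻¹) := by
    have hcard : (Fintype.card ↥H : k) ≠ 0 := Nat.cast_ne_zero.mpr Fintype.card_ne_zero
    apply mul_left_cancel₀ hcard
    rw [claim1, Finset.sum_congr rfl (fun g _ => claim2 g), ← Finset.mul_sum]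
  -- Step 4 : positivity
  set T : FDRep k K := MonoidalCategory.tensorObj X Y with hT
  have step4 : ∑ g : K, F g = ∑ g : K, T.character g * T.character g⁻¹ := by
    refine Finset.sum_congr rfl fun g _ => ?_
    have hTg : ∀ x : K, T.character x = trace k V (ρV x) * trace k W (ρW x) := by
      intro x
      rw [hT, FDRep.char_tensor]
      rfl
    rw [hTg g, hTg g⁻¹, hF]
    simp only
    have := step1 g⁻¹
    calc (trace k V (ρV g) * trace k W (ρW g)) *
          (trace k V (ρV g⁻¹) * trace k W' (ρW' g⁻¹))
        = (trace k V (ρV g) * trace k W (ρW g)) *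
          (trace k V (ρV g⁻¹) * trace k W (ρW g⁻¹)) := by rw [step1 g⁻¹]
      _ = _ := rfl
  have hpos : ∑ g : K, T.character g * T.character g⁻¹ ≠ 0 := by
    have h2 : ∑ g : K, T.character g * T.character g⁻¹
        = ∑ g : K, (FDRep.of (linHom T.ρ T.ρ)).character g := by
      refine Finset.sum_congr rfl fun g _ => ?_
      rw [FDRep.char_linHom T T g, mul_comm]
    have h3 := FDRep.average_char_eq_finrank_invariants (FDRep.of (linHom T.ρ T.ρ))
    have hfinpos : 0 < finrank k (invariants (linHom T.ρ T.ρ)) := by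
      haveI : Nontrivial (↥T.V) := by
        have h5 : Nontrivial V := hV.1
        have h6 : Nontrivial W := hW.1
        have : 0 < finrank k (V ⊗[k] W) := by
          rw [Module.finrank_tensorProduct]
          exact Nat.mul_pos finrank_pos finrank_pos
        exact (finrank_pos_iff (R := k)).mp this
      rw [Module.finrank_pos_iff_exists_ne_zero]
      refine ⟨⟨LinearMap.id, fun g => by ext v; simp [linHom_apply, ← Module.End.mul_apply,
        ← map_mul]⟩, ?_⟩
      intro h0
      have h7 : (LinearMap.id : ↥T.V →ₗ[k] ↥T.V) = 0 := congrArg Subtype.val h0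
      obtain ⟨x, y, hxy⟩ := ‹Nontrivial (↥T.V)›
      exact hxy ((LinearMap.congr_fun h7 x).trans (LinearMap.congr_fun h7 y).symm)
    intro h0
    rw [h2] at h0
    have h8 : (⅟ (Fintype.card K : k)) • ∑ g : K, (FDRep.of (linHom T.ρ T.ρ)).character g
        = (finrank k (invariants (linHom T.ρ T.ρ)) : k) := by
      rw [invOf_eq_inv, smul_eq_mul, ← Nat.card_eq_fintype_card]; exact h3
    rw [h0, smul_zero] at h8
    exact (Nat.cast_ne_zero.mpr (Nat.pos_iff_ne_zero.mp hfinpos)) h8.symm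
  -- Step 5 : orthogonality
  letI : Fintype K := ‹Fintype K›
  have horth := FDRep.char_orthonormal (G := K) Y Y'
  have hsum : ∑ g : K, Y.character g * Y'.character g⁻¹ ≠ 0 := by
    have : ∑ g : K, Y.character g * Y'.character g⁻¹
        = ∑ g : K, trace k W (ρW g) * trace k W' (ρW' g⁻¹) := rfl
    rw [this, ← step3, step4]
    exact hpos
  have hne : Nonempty (Y ≅ Y') := by
    by_contra hno
    rw [if_neg hno] at horth
    apply hsum
    have := congrArg (fun x => (Fintype.card K : k) • x) horth
    simpa [smul_invOf_smul, Nat.card_eq_fintype_card] using this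
  obtain ⟨i⟩ := hne
  refine ⟨FDRep.isoToLinearEquiv i, fun g v => ?_⟩
  have := FDRep.Iso.conj_ρ i g
  have h9 : Y'.ρ g ((FDRep.isoToLinearEquiv i) v)
      = (FDRep.isoToLinearEquiv i) (Y.ρ g ((FDRep.isoToLinearEquiv i).symm
        ((FDRep.isoToLinearEquiv i) v))) := by
    rw [this]; rfl
  rw [LinearEquiv.symm_apply_apply] at h9
  exact h9.symm

end Core

section Transport

variable {k G₀ G V₀ V : Type*} [Field k] [Group G₀] [Group G]
  [AddCommGroup V₀] [Module k V₀] [AddCommGroup V] [Module k V]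

/-- Transport of a representation along a group hom and a linear equivalence. -/
def transportRep (φ : G₀ →* G) (e : V₀ ≃ₗ[k] V) (ρ : Representation k G V) :
    Representation k G₀ V₀ where
  toFun g := e.symm.conj (ρ (φ g))
  map_one' := by
    refine LinearMap.ext fun v => ?_
    simp [LinearEquiv.conj_apply]
  map_mul' g h := by
    refine LinearMap.ext fun v => ?_
    simp [LinearEquiv.conj_apply, Module.End.mul_apply]

theorem transportRep_apply (φ : G₀ →* G) (e : V₀ ≃ₗ[k] V) (ρ : Representation k G V)
    (g : G₀) (v : V₀) : transportRep φ e ρ g v = e.symm (ρ (φ g) (e v)) := by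
  simp [transportRep, LinearEquiv.conj_apply]

theorem isIrredRep_transport (φ : G₀ ≃* G) (e : V₀ ≃ₗ[k] V) (ρ : Representation k G V)
    (h : IsIrredRep ρ) : IsIrredRep (transportRep φ.toMonoidHom e ρ) := by
  obtain ⟨hnt, hsub⟩ := h
  constructor
  · exact e.toEquiv.nontrivial
  · intro p hp
    set q : Submodule k V := p.map (e : V₀ →ₗ[k] V) with hq
    have hqinv : ∀ g : G, ∀ v ∈ q, ρ g v ∈ q := by
      rintro g v ⟨x, hx, rfl⟩
      refine ⟨transportRep φ.toMonoidHom e ρ (φ.symm g) x, hp _ x hx, ?_⟩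
      rw [transportRep_apply]
      simp
    rcases hsub q hqinv with hb | ht
    · left
      rw [Submodule.eq_bot_iff]
      intro x hx
      have : e x ∈ q := ⟨x, hx, rfl⟩
      rw [hb] at this
      simpa using this
    · right
      rw [Submodule.eq_top_iff']
      intro x
      have : e x ∈ q := ht ▸ Submodule.mem_top
      obtain ⟨y, hy, hyx⟩ := this
      rwa [← e.injective hyx]

end Transport

section TensorTransport

variable {k G₀ G V₀ V W₀ W : Type*} [Field k] [Group G₀] [Group G]
  [AddCommGroup V₀] [Module k V₀] [AddCommGroup V] [Module k V]
  [AddCommGroup W₀] [Module k W₀] [AddCommGroup W] [Module k W]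

theorem congr_equivariant (φ : G₀ →* G) (eV : V₀ ≃ₗ[k] V) (eW : W₀ ≃ₗ[k] W)
    (ρ : Representation k G V) (σ : Representation k G W) (g : G₀) (x : V₀ ⊗[k] W₀) :
    TensorProduct.congr eV eW
        (((transportRep φ eV ρ).tprod (transportRep φ eW σ)) g x)
      = (ρ.tprod σ) (φ g) (TensorProduct.congr eV eW x) := by
  induction x with
  | zero => simp
  | tmul v w =>
      simp [Representation.tprod_apply, transportRep_apply]
  | add x y hx hy =>
      simp only [map_add, hx, hy]

end TensorTransport

end TCaux

open TCaux

/-- (From the proof of Theorem 7.4, cancellation.)  Let `K` be a finite group, `H ⊴ K`,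
`V` a finite-dimensional complex representation of `K` whose restriction to `H` is
irreducible, and `W, W'` irreducible finite-dimensional complex representations of `K` on
which `H` acts trivially.  If `V ⊗ W ≅ V ⊗ W'` as representations of `K`, then `W ≅ W'`. -/
theorem tensor_cancellation
    {K : Type*} [Group K] [Finite K] (H : Subgroup K) [H.Normal]
    {V W W' : Type*} [AddCommGroup V] [Module ℂ V] [FiniteDimensional ℂ V]
    [AddCommGroup W] [Module ℂ W] [FiniteDimensional ℂ W]
    [AddCommGroup W'] [Module ℂ W'] [FiniteDimensional ℂ W']
    (ρV : Representation ℂ K V) (ρW : Representation ℂ K W) (ρW' : Representation ℂ K W')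
    (hV : IsIrredRep (ρV.comp H.subtype))
    (hW : IsIrredRep ρW) (hW' : IsIrredRep ρW')
    (htrivW : ∀ h ∈ H, ρW h = LinearMap.id)
    (htrivW' : ∀ h ∈ H, ρW' h = LinearMap.id)
    (hiso : RepIso (ρV.tprod ρW) (ρV.tprod ρW')) :
    RepIso ρW ρW' := by
  classical
  cases nonempty_fintype K
  haveI : Small.{0} K := inferInstance
  haveI : Small.{0} V := small_map (Module.finBasis ℂ V).equivFun.toEquiv
  haveI : Small.{0} W := small_map (Module.finBasis ℂ W).equivFun.toEquiv
  haveI : Small.{0} W' := small_map (Module.finBasis ℂ W').equivFun.toEquiv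
  let K₀ : Type := Shrink.{0} K
  let φ : K₀ ≃* K := Shrink.mulEquiv
  letI : Fintype K₀ := Fintype.ofEquiv K (equivShrink K)
  let eV : Shrink.{0} V ≃ₗ[ℂ] V := Shrink.linearEquiv ℂ V
  let eW : Shrink.{0} W ≃ₗ[ℂ] W := Shrink.linearEquiv ℂ W
  let eW' : Shrink.{0} W' ≃ₗ[ℂ] W' := Shrink.linearEquiv ℂ W'
  haveI : FiniteDimensional ℂ (Shrink.{0} V) := LinearEquiv.finiteDimensional eV.symm
  haveI : FiniteDimensional ℂ (Shrink.{0} W) := LinearEquiv.finiteDimensional eW.symm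
  haveI : FiniteDimensional ℂ (Shrink.{0} W') := LinearEquiv.finiteDimensional eW'.symm
  let ρV₀ : Representation ℂ K₀ (Shrink.{0} V) := transportRep φ.toMonoidHom eV ρV
  let ρW₀ : Representation ℂ K₀ (Shrink.{0} W) := transportRep φ.toMonoidHom eW ρW
  let ρW'₀ : Representation ℂ K₀ (Shrink.{0} W') := transportRep φ.toMonoidHom eW' ρW'
  let H₀ : Subgroup K₀ := H.comap φ.toMonoidHom
  let ψ : ↥H₀ ≃* ↥H :=
    { toFun := fun h => ⟨φ h, h.2⟩
      invFun := fun h => ⟨φ.symm h, by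
        simp only [H₀, Subgroup.mem_comap, MulEquiv.coe_toMonoidHom, MulEquiv.apply_symm_apply]
        exact h.2⟩
      left_inv := fun h => by ext; simp
      right_inv := fun h => by ext; simp
      map_mul' := fun a b => by ext; simp }
  -- transported hypotheses
  have hV₀ : IsIrredRep (ρV₀.comp H₀.subtype) := by
    have heq : ρV₀.comp H₀.subtype
        = transportRep ψ.toMonoidHom eV (ρV.comp H.subtype) := rfl
    rw [heq]
    exact isIrredRep_transport ψ eV _ hV
  have hW₀ : IsIrredRep ρW₀ := isIrredRep_transport φ eW ρW hW
  have hW'₀ : IsIrredRep ρW'₀ := isIrredRep_transport φ eW' ρW' hW'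
  have htrivW₀ : ∀ h ∈ H₀, ρW₀ h = LinearMap.id := by
    intro h hh
    refine LinearMap.ext fun v => ?_
    rw [show ρW₀ h v = eW.symm (ρW (φ h) (eW v)) from transportRep_apply _ _ _ _ _]
    rw [htrivW (φ h) hh]
    simp
  have htrivW'₀ : ∀ h ∈ H₀, ρW'₀ h = LinearMap.id := by
    intro h hh
    refine LinearMap.ext fun v => ?_
    rw [show ρW'₀ h v = eW'.symm (ρW' (φ h) (eW' v)) from transportRep_apply _ _ _ _ _]
    rw [htrivW' (φ h) hh]
    simp
  have hiso₀ : RepIso (ρV₀.tprod ρW₀) (ρV₀.tprod ρW'₀) := by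
    obtain ⟨e, he⟩ := hiso
    refine ⟨(TensorProduct.congr eV eW).trans (e.trans (TensorProduct.congr eV eW').symm),
      fun g x => ?_⟩
    simp only [LinearEquiv.trans_apply]
    rw [congr_equivariant φ.toMonoidHom eV eW ρV ρW g x, he _ _]
    have key := congr_equivariant φ.toMonoidHom eV eW' ρV ρW' g
      ((TensorProduct.congr eV eW').symm (e (TensorProduct.congr eV eW x)))
    rw [LinearEquiv.apply_symm_apply] at key
    rw [← key, LinearEquiv.symm_apply_apply]
  obtain ⟨e₀, he₀⟩ := core H₀ ρV₀ ρW₀ ρW'₀ hV₀ hW₀ hW'₀ htrivW₀ htrivW'₀ hiso₀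
  refine ⟨(eW.symm.trans e₀).trans eW', fun g v => ?_⟩
  simp only [LinearEquiv.trans_apply]
  have h1 := he₀ (φ.symm g) (eW.symm v)
  rw [show ρW₀ (φ.symm g) (eW.symm v) = eW.symm (ρW (φ (φ.symm g)) (eW (eW.symm v)))
    from transportRep_apply _ _ _ _ _] at h1
  rw [MulEquiv.apply_symm_apply, LinearEquiv.apply_symm_apply] at h1
  rw [show ρW'₀ (φ.symm g) (e₀ (eW.symm v))
      = eW'.symm (ρW' (φ (φ.symm g)) (eW' (e₀ (eW.symm v))))
    from transportRep_apply _ _ _ _ _] at h1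
  rw [MulEquiv.apply_symm_apply] at h1
  rw [h1, LinearEquiv.apply_symm_apply]
end
end

section
/- Let H be a finite group and Z ≤ Z(H) a central subgroup with [H, H] ⊆ Z. Let χ : Z → ℂˣ be a group homomorphism such that for every x ∈ H ∖ Z there exists y ∈ H with χ([x, y]) ≠ 1. Then: (i) there exists an irreducible finite-dimensional complex representation π of H with π(z) = χ(z)·id for all z ∈ Z; (ii) any two such representations are isomorphic; and (iii) (dim π)² = [H : Z]. -/
/-- A bundled complex representation of a group `H`. -/
structure CRep (H : Type*) [Group H] where
  carrier : Type
  [acg : AddCommGroup carrier]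
  [mod : Module ℂ carrier]
  rep : Representation ℂ H carrier

attribute [instance] CRep.acg CRep.mod

open scoped commutatorElement

namespace HeisAux

open Finset LinearMap

variable {H : Type*} [Group H] {Z : Subgroup H}

noncomputable def phi (hcomm : ∀ x y : H, ⁅x, y⁆ ∈ Z) (χ : Z →* ℂˣ) (y x : H) : ℂ :=
  (χ ⟨⁅y, x⁆, hcomm y x⟩ : ℂˣ)

variable (hcomm : ∀ x y : H, ⁅x, y⁆ ∈ Z) (χ : Z →* ℂˣ)

theorem phi_ne_zero (y x : H) : phi hcomm χ y x ≠ 0 := Units.ne_zero _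

theorem phi_of_mem (hZ : Z ≤ Subgroup.center H) (y x : H) (hx : x ∈ Z) : phi hcomm χ y x = 1 := by
  have h1 : ⁅y, x⁆ = 1 :=
    commutatorElement_eq_one_iff_commute.mpr (Subgroup.mem_center_iff.mp (hZ hx) y)
  have h2 : (⟨⁅y, x⁆, hcomm y x⟩ : Z) = 1 := Subtype.ext (by simpa using h1)
  simp [phi, h2]

theorem phi_mul_left (hZ : Z ≤ Subgroup.center H) (a b x : H) :
    phi hcomm χ (a * b) x = phi hcomm χ a x * phi hcomm χ b x := by
  have hc : ∀ g : H, g * ⁅b, x⁆ = ⁅b, x⁆ * g := fun g =>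
    Subgroup.mem_center_iff.mp (hZ (hcomm b x)) g
  have key : ⁅a * b, x⁆ = ⁅b, x⁆ * ⁅a, x⁆ := by
    have h1 : ⁅a * b, x⁆ = a * ⁅b, x⁆ * a⁻¹ * ⁅a, x⁆ := by
      simp only [commutatorElement_def]; group
    rw [h1, hc a]; group
  have h2 : (⟨⁅a * b, x⁆, hcomm _ _⟩ : Z) = ⟨⁅b, x⁆, hcomm _ _⟩ * ⟨⁅a, x⁆, hcomm _ _⟩ :=
    Subtype.ext (by simpa using key)
  simp only [phi, h2, map_mul, Units.val_mul]
  ring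

theorem phi_exists_ne_one
    (hnd : ∀ x : H, x ∉ Z → ∃ y : H, χ ⟨⁅x, y⁆, hcomm x y⟩ ≠ 1)
    (t : H) (ht : t ∉ Z) : ∃ y : H, phi hcomm χ y t ≠ 1 := by
  obtain ⟨y, hy⟩ := hnd t ht
  refine ⟨y, fun h => hy ?_⟩
  have h2 : (⟨⁅y, t⁆, hcomm y t⟩ : Z) = (⟨⁅t, y⁆, hcomm t y⟩ : Z)⁻¹ :=
    Subtype.ext (by simp [commutatorElement_inv])
  have h3 : (χ ⟨⁅y, t⁆, hcomm y t⟩ : ℂˣ) = (χ ⟨⁅t, y⁆, hcomm t y⟩)⁻¹ := by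
    rw [h2, map_inv]
  have h4 : ((χ ⟨⁅t, y⁆, hcomm t y⟩)⁻¹ : ℂˣ) = 1 := by
    apply Units.ext
    simpa [phi, h3] using h
  simpa [inv_eq_one] using h4

theorem phi_sum [Fintype H] [DecidablePred (· ∈ Z)] (hZ : Z ≤ Subgroup.center H)
    (hnd : ∀ x : H, x ∉ Z → ∃ y : H, χ ⟨⁅x, y⁆, hcomm x y⟩ ≠ 1) (t : H) :
    ∑ y : H, phi hcomm χ y t = if t ∈ Z then (Fintype.card H : ℂ) else 0 := by
  by_cases ht : t ∈ Z
  · rw [if_pos ht]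
    rw [Finset.sum_congr rfl fun y _ => phi_of_mem hcomm χ hZ y t ht]
    simp
  · rw [if_neg ht]
    obtain ⟨y₀, hy₀⟩ := phi_exists_ne_one hcomm χ hnd t ht
    have hre : ∑ y : H, phi hcomm χ y t = ∑ y : H, phi hcomm χ (y₀ * y) t := by
      exact (Fintype.sum_equiv (Equiv.mulLeft y₀) _ _ (fun y => by
        simp [Equiv.coe_mulLeft])).symm
    have : ∑ y : H, phi hcomm χ (y₀ * y) t
        = phi hcomm χ y₀ t * ∑ y : H, phi hcomm χ y t := by
      rw [Finset.mul_sum]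
      exact Finset.sum_congr rfl fun y _ => phi_mul_left hcomm χ hZ y₀ y t
    have h2 : (phi hcomm χ y₀ t - 1) * ∑ y : H, phi hcomm χ y t = 0 := by
      rw [sub_mul, one_mul, sub_eq_zero]
      exact this.symm.trans hre.symm
    rcases mul_eq_zero.mp h2 with h | h
    · exact absurd (sub_eq_zero.mp h) hy₀
    · exact h


section Rep

variable {V : Type*} [AddCommGroup V] [Module ℂ V]
variable (π : Representation ℂ H V)

theorem rep_of_mem (hχ : ∀ z : Z, π (z : H) = (χ z : ℂ) • LinearMap.id) (t : H) (ht : t ∈ Z) (v : V) :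
    π t v = ((χ ⟨t, ht⟩ : ℂˣ) : ℂ) • v := by
  have := hχ ⟨t, ht⟩
  rw [show π t = π ((⟨t, ht⟩ : Z) : H) from rfl, this]
  simp

theorem rep_inv_of_mem (hχ : ∀ z : Z, π (z : H) = (χ z : ℂ) • LinearMap.id) (t : H) (ht : t ∈ Z) (v : V) :
    π t⁻¹ v = ((χ ⟨t, ht⟩ : ℂˣ) : ℂ)⁻¹ • v := by
  have h1 : π t⁻¹ v = ((χ ⟨t⁻¹, inv_mem ht⟩ : ℂˣ) : ℂ) • v :=
    rep_of_mem χ π hχ t⁻¹ (inv_mem ht) v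
  have h2 : (⟨t⁻¹, inv_mem ht⟩ : Z) = (⟨t, ht⟩ : Z)⁻¹ := rfl
  rw [h1, h2, map_inv]
  simp

theorem rep_conj (hχ : ∀ z : Z, π (z : H) = (χ z : ℂ) • LinearMap.id) (y t : H) (v : V) :
    π y (π t (π y⁻¹ v)) = phi hcomm χ y t • π t v := by
  have h1 : π y (π t (π y⁻¹ v)) = π (y * t * y⁻¹) v := by
    simp [map_mul]
  have h2 : y * t * y⁻¹ = ⁅y, t⁆ * t := by
    rw [commutatorElement_def]; group
  rw [h1, h2, map_mul]
  have : π ⁅y, t⁆ (π t v) = phi hcomm χ y t • π t v :=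
    rep_of_mem χ π hχ _ (hcomm y t) _
  simpa [Module.End.mul_apply] using this

theorem rep_conj_mul (hχ : ∀ z : Z, π (z : H) = (χ z : ℂ) • LinearMap.id) (y t : H) :
    π y * π t * π y⁻¹ = phi hcomm χ y t • π t := by
  ext v
  have := rep_conj hcomm χ π hχ y t v
  simpa [Module.End.mul_apply] using this

theorem rep_unit_mul_inv (y : H) : π y * π y⁻¹ = 1 := by
  rw [← map_mul, mul_inv_cancel, map_one]

theorem rep_ne_zero [Nontrivial V] (t : H) : π t ≠ 0 := by
  intro h
  have h1 : π t * π t⁻¹ = 1 := rep_unit_mul_inv π t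
  rw [h, zero_mul] at h1
  obtain ⟨v, hv⟩ := exists_ne (0 : V)
  have := LinearMap.ext_iff.mp h1 v
  simp at this
  exact hv this.symm

end Rep

section Schur

variable {V W : Type*} [AddCommGroup V] [Module ℂ V] [AddCommGroup W] [Module ℂ W]

theorem schur_scalar [FiniteDimensional ℂ V] (π : Representation ℂ H V)
    (hirr : IsIrredRep π) (g : V →ₗ[ℂ] V) (hg : ∀ h : H, π h * g = g * π h) :
    ∃ c : ℂ, g = c • LinearMap.id := by
  haveI := hirr.1
  obtain ⟨c, hc⟩ := Module.End.exists_eigenvalue g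
  obtain ⟨v, hv⟩ := hc.exists_hasEigenvector
  refine ⟨c, ?_⟩
  set p := LinearMap.ker (g - c • LinearMap.id) with hp
  have hmem : ∀ u : V, u ∈ p ↔ g u = c • u := by
    intro u; simp [hp, LinearMap.mem_ker, sub_eq_zero]
  have hinv : ∀ h : H, ∀ u ∈ p, π h u ∈ p := by
    intro h u hu
    rw [hmem] at hu ⊢
    have h1 : g (π h u) = π h (g u) := by
      have := LinearMap.ext_iff.mp (hg h) u
      simpa [Module.End.mul_apply] using this.symm
    rw [h1, hu, map_smul]
  rcases hirr.2 p hinv with hbot | htop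
  · exfalso
    have : v ∈ p := (hmem v).mpr hv.apply_eq_smul
    rw [hbot] at this
    simp at this
    exact hv.2 this
  · have : g - c • LinearMap.id = 0 := LinearMap.ker_eq_top.mp htop
    have := sub_eq_zero.mp this
    exact this

theorem schur_equiv (π : Representation ℂ H V) (π' : Representation ℂ H W)
    (hirr : IsIrredRep π) (hirr' : IsIrredRep π')
    (g : V →ₗ[ℂ] W) (hg : ∀ (h : H) (v : V), g (π h v) = π' h (g v)) (hg0 : g ≠ 0) :
    RepIso π π' := by
  have hker : LinearMap.ker g = ⊥ := by
    rcases hirr.2 (LinearMap.ker g) (fun h v hv => by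
      rw [LinearMap.mem_ker] at hv ⊢
      rw [hg h v, hv, map_zero]) with h | h
    · exact h
    · exfalso; apply hg0
      ext v
      have : v ∈ LinearMap.ker g := h ▸ Submodule.mem_top
      simpa using this
  have hrange : LinearMap.range g = ⊤ := by
    rcases hirr'.2 (LinearMap.range g) (fun h w hw => by
      obtain ⟨v, rfl⟩ := hw
      exact ⟨π h v, hg h v⟩) with h | h
    · exfalso; apply hg0
      ext v
      have : g v ∈ LinearMap.range g := ⟨v, rfl⟩
      rw [h] at this
      simpa using this
    · exact h
  refine ⟨LinearEquiv.ofBijective g ⟨LinearMap.ker_eq_bot.mp hker,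
    LinearMap.range_eq_top.mp hrange⟩, fun h v => hg h v⟩

end Schur

section TraceAux

theorem trace_smulRight' {M : Type*} [AddCommGroup M] [Module ℂ M] [FiniteDimensional ℂ M]
    (l : M →ₗ[ℂ] ℂ) (x : M) :
    LinearMap.trace ℂ M (l.smulRight x) = l x := by
  have h1 : (LinearMap.toSpanSingleton ℂ M x) ∘ₗ l = l.smulRight x := by
    ext m; simp [LinearMap.toSpanSingleton_apply]
  rw [← h1, LinearMap.trace_comp_comm']
  have h2 : l ∘ₗ LinearMap.toSpanSingleton ℂ M x = (l x) • LinearMap.id := by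
    apply LinearMap.ext_ring
    simp [LinearMap.toSpanSingleton_apply]
  rw [h2, map_smul, LinearMap.trace_id]
  simp

end TraceAux

section Unique

variable {V W : Type*} [AddCommGroup V] [Module ℂ V] [AddCommGroup W] [Module ℂ W]

theorem unique_main [Finite H] (hZ : Z ≤ Subgroup.center H)
    (hnd : ∀ x : H, x ∉ Z → ∃ y : H, χ ⟨⁅x, y⁆, hcomm x y⟩ ≠ 1)
    (π : Representation ℂ H V) (π' : Representation ℂ H W)
    [FiniteDimensional ℂ V] [FiniteDimensional ℂ W]
    (hirr : IsIrredRep π) (hirr' : IsIrredRep π')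
    (hχ : ∀ z : Z, π (z : H) = (χ z : ℂ) • LinearMap.id)
    (hχ' : ∀ z : Z, π' (z : H) = (χ z : ℂ) • LinearMap.id) :
    RepIso π π' := by
  classical
  haveI : Fintype H := Fintype.ofFinite H
  haveI := hirr.1
  haveI := hirr'.1
  obtain ⟨w₀, hw₀⟩ := exists_ne (0 : W)
  have hd : 0 < Module.finrank ℂ V := Module.finrank_pos
  set b := Module.finBasis ℂ V with hbdef
  set i0 : Fin (Module.finrank ℂ V) := ⟨0, hd⟩ with hi0
  set f₀ : V →ₗ[ℂ] W := (b.coord i0).smulRight w₀ with hf₀def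
  have hf₀ : f₀ ≠ 0 := by
    intro h
    have h2 : f₀ (b i0) = w₀ := by
      simp [hf₀def, Module.Basis.coord_apply, Module.Basis.repr_self]
    rw [h] at h2
    simp at h2
    exact hw₀ h2.symm
  set B : (V →ₗ[ℂ] W) → (V →ₗ[ℂ] W) := fun f => ∑ t : H, (π' t) ∘ₗ f ∘ₗ (π t⁻¹) with hB
  have key : ∀ f : V →ₗ[ℂ] W, (∑ y : H, (π' y) ∘ₗ (B ((π' y⁻¹) ∘ₗ f)))
      = ((Nat.card H * Nat.card Z : ℕ) : ℂ) • f := by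
    intro f
    apply LinearMap.ext
    intro v
    simp only [LinearMap.sum_apply, LinearMap.smul_apply]
    have step1 : ∀ y : H, ((π' y) ∘ₗ (B ((π' y⁻¹) ∘ₗ f))) v
        = ∑ t : H, π' y (π' t (π' y⁻¹ (f (π t⁻¹ v)))) := by
      intro y
      simp only [hB, LinearMap.comp_apply, LinearMap.sum_apply, map_sum]
    calc (∑ y : H, ((π' y) ∘ₗ (B ((π' y⁻¹) ∘ₗ f))) v)
        = ∑ y : H, ∑ t : H, phi hcomm χ y t • π' t (f (π t⁻¹ v)) := by
          refine Finset.sum_congr rfl fun y _ => ?_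
          rw [step1 y]
          exact Finset.sum_congr rfl fun t _ => rep_conj hcomm χ π' hχ' y t _
      _ = ∑ t : H, (∑ y : H, phi hcomm χ y t) • π' t (f (π t⁻¹ v)) := by
          rw [Finset.sum_comm]
          exact Finset.sum_congr rfl fun t _ => (Finset.sum_smul).symm
      _ = ∑ t : H, (if t ∈ Z then ((Fintype.card H : ℂ) • f v) else 0) := by
          refine Finset.sum_congr rfl fun t _ => ?_
          rw [phi_sum hcomm χ hZ hnd t]
          by_cases ht : t ∈ Z
          · rw [if_pos ht, if_pos ht]
            have h1 : π t⁻¹ v = ((χ ⟨t, ht⟩ : ℂˣ) : ℂ)⁻¹ • v := rep_inv_of_mem χ π hχ t ht v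
            have h2 : π' t (((χ ⟨t, ht⟩ : ℂˣ) : ℂ)⁻¹ • f v)
                = ((χ ⟨t, ht⟩ : ℂˣ) : ℂ) • (((χ ⟨t, ht⟩ : ℂˣ) : ℂ)⁻¹ • f v) :=
              rep_of_mem χ π' hχ' t ht _
            rw [h1, map_smul, h2]
            rw [smul_smul, smul_smul, mul_assoc, mul_inv_cancel₀ (Units.ne_zero _), mul_one]
          · simp [ht]
      _ = ((Finset.univ.filter (· ∈ Z)).card) • ((Fintype.card H : ℂ) • f v) := by
          rw [← Finset.sum_filter, Finset.sum_const]
      _ = ((Nat.card H * Nat.card Z : ℕ) : ℂ) • f v := by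
          have h1 : (Finset.univ.filter (· ∈ Z)).card = Nat.card Z := by
            rw [Nat.card_eq_fintype_card, Fintype.card_subtype]
          rw [h1, ← Nat.cast_smul_eq_nsmul ℂ, smul_smul]
          have h2 : ((Nat.card Z : ℂ)) * (Fintype.card H : ℂ)
              = ((Nat.card H * Nat.card Z : ℕ) : ℂ) := by
            rw [Nat.card_eq_fintype_card (α := H)]
            push_cast
            ring
          rw [h2]
  have hBne : ∃ f₁, B f₁ ≠ 0 := by
    by_contra hcon
    push_neg at hcon
    have h0 := key f₀
    have hzero : (∑ y : H, (π' y) ∘ₗ (B ((π' y⁻¹) ∘ₗ f₀))) = 0 := by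
      refine Finset.sum_eq_zero fun y _ => ?_
      rw [hcon ((π' y⁻¹) ∘ₗ f₀)]
      ext v
      simp
    rw [hzero] at h0
    have hc0 : ((Nat.card H * Nat.card Z : ℕ) : ℂ) ≠ 0 := by
      have h3 : 0 < Nat.card H * Nat.card Z :=
        Nat.mul_pos Nat.card_pos Nat.card_pos
      exact_mod_cast h3.ne'
    exact hf₀ ((smul_eq_zero.mp h0.symm).resolve_left hc0)
  obtain ⟨f₁, hf₁⟩ := hBne
  have hequiv : ∀ (h : H) (v : V), (B f₁) (π h v) = π' h ((B f₁) v) := by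
    intro h v
    have lhs : (B f₁) (π h v) = ∑ t : H, π' t (f₁ (π (t⁻¹ * h) v)) := by
      simp only [hB, LinearMap.sum_apply, LinearMap.comp_apply]
      refine Finset.sum_congr rfl fun t _ => ?_
      congr 1
      rw [← Module.End.mul_apply, ← map_mul]
    have rhs : π' h ((B f₁) v) = ∑ t : H, π' (h * t) (f₁ (π t⁻¹ v)) := by
      simp only [hB, LinearMap.sum_apply, LinearMap.comp_apply, map_sum]
      refine Finset.sum_congr rfl fun t _ => ?_
      rw [← Module.End.mul_apply, ← map_mul]
    rw [lhs, rhs]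
    refine (Fintype.sum_equiv (Equiv.mulLeft h)
      (fun t => π' (h * t) (f₁ (π t⁻¹ v)))
      (fun t => π' t (f₁ (π (t⁻¹ * h) v))) (fun t => ?_)).symm
    simp only [Equiv.coe_mulLeft]
    congr 2
    rw [mul_inv_rev]
    group
  exact schur_equiv π π' hirr hirr' (B f₁) hequiv hf₁

end Unique

section Dim

variable {V : Type*} [AddCommGroup V] [Module ℂ V]

theorem dim_main [Finite H] (hZ : Z ≤ Subgroup.center H)
    (hnd : ∀ x : H, x ∉ Z → ∃ y : H, χ ⟨⁅x, y⁆, hcomm x y⟩ ≠ 1)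
    (π : Representation ℂ H V) [FiniteDimensional ℂ V]
    (hirr : IsIrredRep π)
    (hχ : ∀ z : Z, π (z : H) = (χ z : ℂ) • LinearMap.id) :
    (Module.finrank ℂ V) ^ 2 = Z.index := by
  classical
  haveI : Fintype H := Fintype.ofFinite H
  haveI := hirr.1
  set d := Module.finrank ℂ V with hd
  have hdpos : 0 < d := Module.finrank_pos
  set D : H → ((V →ₗ[ℂ] V) →ₗ[ℂ] (V →ₗ[ℂ] V)) :=
    fun t => (LinearMap.mulLeft ℂ (π t)) ∘ₗ (LinearMap.mulRight ℂ (π t⁻¹)) with hD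
  have hDapp : ∀ (t : H) (f : V →ₗ[ℂ] V), D t f = π t * f * π t⁻¹ := by
    intro t f
    simp only [hD, LinearMap.comp_apply, LinearMap.mulLeft_apply, LinearMap.mulRight_apply]
    rw [mul_assoc]
  set Q : (V →ₗ[ℂ] V) →ₗ[ℂ] (V →ₗ[ℂ] V) := ∑ t : H, D t with hQ
  have hQapp : ∀ f : V →ₗ[ℂ] V, Q f = ∑ t : H, π t * f * π t⁻¹ := by
    intro f
    rw [hQ, LinearMap.sum_apply]
    exact Finset.sum_congr rfl fun t _ => hDapp t f
  have hQcomm : ∀ (f : V →ₗ[ℂ] V) (h : H), π h * (Q f) = (Q f) * π h := by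
    intro f h
    rw [hQapp, Finset.mul_sum, Finset.sum_mul]
    refine Fintype.sum_equiv (Equiv.mulLeft h)
      (fun t => π h * (π t * f * π t⁻¹)) (fun t => π t * f * π t⁻¹ * π h) (fun x => ?_)
    simp only [Equiv.coe_mulLeft]
    have e1 : π ((h * x)⁻¹) * π h = π x⁻¹ := by
      rw [← map_mul]
      congr 1
      group
    calc π h * (π x * f * π x⁻¹) = (π h * π x) * f * π x⁻¹ := by noncomm_ring
      _ = π (h * x) * f * (π ((h * x)⁻¹) * π h) := by rw [map_mul, e1]
      _ = π (h * x) * f * π (h * x)⁻¹ * π h := by noncomm_ring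
  set tr2 := LinearMap.trace ℂ (V →ₗ[ℂ] V) with htr2def
  have hterm : ∀ t : H, tr2 (D t) = if t ∈ Z then ((d * d : ℕ) : ℂ) else 0 := by
    intro t
    by_cases ht : t ∈ Z
    · rw [if_pos ht]
      have hid : D t = LinearMap.id := by
        apply LinearMap.ext
        intro f
        rw [hDapp]
        have h1 : π t = ((χ ⟨t, ht⟩ : ℂˣ) : ℂ) • (1 : V →ₗ[ℂ] V) := by
          have := hχ ⟨t, ht⟩
          rw [show π t = π ((⟨t, ht⟩ : Z) : H) from rfl, this, Module.End.one_eq_id]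
        have h2 : π t⁻¹ = ((χ ⟨t, ht⟩ : ℂˣ) : ℂ)⁻¹ • (1 : V →ₗ[ℂ] V) := by
          apply LinearMap.ext
          intro v
          rw [rep_inv_of_mem χ π hχ t ht v]
          simp
        rw [h1, h2, LinearMap.id_apply]
        simp only [smul_mul_assoc, mul_smul_comm, one_mul, mul_one, smul_smul]
        rw [inv_mul_cancel₀ (Units.ne_zero _), one_smul]
      rw [hid, htr2def, LinearMap.trace_id, Module.finrank_linearMap]
    · rw [if_neg ht]
      obtain ⟨y, hy⟩ := phi_exists_ne_one hcomm χ hnd t ht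
      have hcompl : (LinearMap.mulLeft ℂ (π y)) ∘ₗ (LinearMap.mulLeft ℂ (π y⁻¹))
          = LinearMap.id := by
        apply LinearMap.ext
        intro f
        simp only [LinearMap.comp_apply, LinearMap.mulLeft_apply, LinearMap.id_apply]
        rw [← mul_assoc, ← map_mul, mul_inv_cancel, map_one, one_mul]
      have hcompr : (LinearMap.mulLeft ℂ (π y⁻¹)) ∘ₗ (LinearMap.mulLeft ℂ (π y))
          = LinearMap.id := by
        apply LinearMap.ext
        intro f
        simp only [LinearMap.comp_apply, LinearMap.mulLeft_apply, LinearMap.id_apply]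
        rw [← mul_assoc, ← map_mul, inv_mul_cancel, map_one, one_mul]
      set e : (V →ₗ[ℂ] V) ≃ₗ[ℂ] (V →ₗ[ℂ] V) :=
        LinearEquiv.ofLinear (LinearMap.mulLeft ℂ (π y)) (LinearMap.mulLeft ℂ (π y⁻¹))
          hcompl hcompr with he
      have hconj : e.conj (D t) = phi hcomm χ y t • D t := by
        apply LinearMap.ext
        intro f
        rw [LinearEquiv.conj_apply]
        simp only [LinearMap.comp_apply, LinearMap.smul_apply, LinearEquiv.coe_coe,
          he, LinearEquiv.ofLinear_apply, LinearEquiv.ofLinear_symm_apply,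
          LinearMap.mulLeft_apply, hDapp]
        calc π y * (π t * (π y⁻¹ * f) * π t⁻¹)
            = (π y * π t * π y⁻¹) * f * π t⁻¹ := by noncomm_ring
          _ = (phi hcomm χ y t • π t) * f * π t⁻¹ := by
              rw [rep_conj_mul hcomm χ π hχ y t]
          _ = phi hcomm χ y t • (π t * f * π t⁻¹) := by
              rw [smul_mul_assoc, smul_mul_assoc]
      have h3 := LinearMap.trace_conj' (D t) e
      rw [hconj, map_smul] at h3
      have h4 : (phi hcomm χ y t - 1) * tr2 (D t) = 0 := by
        rw [sub_mul, one_mul, sub_eq_zero]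
        simpa [htr2def, smul_eq_mul] using h3
      rcases mul_eq_zero.mp h4 with h | h
      · exact absurd (sub_eq_zero.mp h) hy
      · exact h
  have htr1 : tr2 Q = (Nat.card Z : ℂ) * ((d * d : ℕ) : ℂ) := by
    rw [hQ, map_sum]
    rw [Finset.sum_congr rfl (fun t _ => hterm t), ← Finset.sum_filter, Finset.sum_const]
    have h1 : (Finset.univ.filter (· ∈ Z)).card = Nat.card Z := by
      rw [Nat.card_eq_fintype_card, Fintype.card_subtype]
    rw [h1, nsmul_eq_mul]
  set lam : (V →ₗ[ℂ] V) →ₗ[ℂ] ℂ := (LinearMap.trace ℂ V) ∘ₗ Q with hlam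
  have hsr : (d : ℂ) • Q = lam.smulRight (LinearMap.id : V →ₗ[ℂ] V) := by
    apply LinearMap.ext
    intro f
    obtain ⟨c, hc⟩ := schur_scalar π hirr (Q f) (fun h => hQcomm f h)
    simp only [LinearMap.smul_apply, LinearMap.smulRight_apply, hlam, LinearMap.comp_apply]
    rw [hc, map_smul, LinearMap.trace_id]
    simp only [smul_smul, smul_eq_mul, ← hd]
    rw [mul_comm]
  have hQ1 : Q (LinearMap.id) = (Fintype.card H : ℂ) • (1 : V →ₗ[ℂ] V) := by
    rw [hQapp]
    have hterm1 : ∀ t : H, π t * LinearMap.id * π t⁻¹ = 1 := by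
      intro t
      rw [← Module.End.one_eq_id, mul_one, rep_unit_mul_inv]
    rw [Finset.sum_congr rfl (fun t _ => hterm1 t), Finset.sum_const, Finset.card_univ]
    exact (Nat.cast_smul_eq_nsmul ℂ _ _).symm
  have htr2 : (d : ℂ) * tr2 Q = (Fintype.card H : ℂ) * (d : ℂ) := by
    calc (d : ℂ) * tr2 Q = tr2 ((d : ℂ) • Q) := by rw [map_smul, smul_eq_mul]
      _ = tr2 (lam.smulRight LinearMap.id) := by rw [hsr]
      _ = lam LinearMap.id := trace_smulRight' lam LinearMap.id
      _ = LinearMap.trace ℂ V (Q LinearMap.id) := rfl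
      _ = (Fintype.card H : ℂ) * (d : ℂ) := by
          rw [hQ1, map_smul, LinearMap.trace_one, smul_eq_mul, hd]
  have hdne : (d : ℂ) ≠ 0 := Nat.cast_ne_zero.mpr hdpos.ne'
  have h5 : tr2 Q = (Fintype.card H : ℂ) :=
    mul_left_cancel₀ hdne (htr2.trans (mul_comm _ _))
  rw [htr1] at h5
  have hZne : (Nat.card Z : ℂ) ≠ 0 := Nat.cast_ne_zero.mpr Nat.card_pos.ne'
  have h6 : ((d * d : ℕ) : ℂ) = (Z.index : ℂ) := by
    apply mul_left_cancel₀ hZne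
    rw [h5]
    have h7 : (Nat.card Z) * Z.index = Nat.card H := Subgroup.card_mul_index Z
    rw [← Nat.card_eq_fintype_card, ← h7]
    push_cast
    ring
  have h8 : d * d = Z.index := Nat.cast_injective h6
  rw [sq]
  exact h8

end Dim

section Exists

variable {X : Type*} [AddCommGroup X] [Module ℂ X]

theorem exists_min_invariant [FiniteDimensional ℂ X] (σ : Representation ℂ H X)
    (U : Submodule ℂ X) (hU0 : U ≠ ⊥) (hUinv : ∀ h : H, ∀ x ∈ U, σ h x ∈ U) :
    ∃ p : Submodule ℂ X, p ≤ U ∧ p ≠ ⊥ ∧ (∀ h : H, ∀ x ∈ p, σ h x ∈ p) ∧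
      ∀ q : Submodule ℂ X, q ≤ p → q ≠ ⊥ → (∀ h : H, ∀ x ∈ q, σ h x ∈ q) → q = p := by
  classical
  set P : ℕ → Prop := fun k => ∃ p : Submodule ℂ X,
    (p ≤ U ∧ p ≠ ⊥ ∧ (∀ h : H, ∀ x ∈ p, σ h x ∈ p)) ∧ Module.finrank ℂ p = k with hP
  have hex : ∃ k, P k := ⟨Module.finrank ℂ U, U, ⟨le_refl U, hU0, hUinv⟩, rfl⟩
  obtain ⟨p, ⟨hpU, hp0, hpinv⟩, hpk⟩ := Nat.find_spec hex
  refine ⟨p, hpU, hp0, hpinv, fun q hqp hq0 hqinv => ?_⟩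
  have hq : P (Module.finrank ℂ q) := ⟨q, ⟨hqp.trans hpU, hq0, hqinv⟩, rfl⟩
  have h1 : Nat.find hex ≤ Module.finrank ℂ q := Nat.find_le hq
  have h2 : Module.finrank ℂ q ≤ Module.finrank ℂ p := Submodule.finrank_mono hqp
  exact Submodule.eq_of_le_of_finrank_eq hqp (le_antisymm h2 (hpk ▸ h1))

/-- The restriction of a representation to an invariant submodule. -/
noncomputable def resRep (σ : Representation ℂ H X) (p : Submodule ℂ X)
    (hp : ∀ h : H, ∀ x ∈ p, σ h x ∈ p) : Representation ℂ H p :=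
  { toFun := fun h => (σ h).restrict (fun x hx => hp h x hx)
    map_one' := by
      apply LinearMap.ext
      intro x
      apply Subtype.ext
      simp [LinearMap.restrict_coe_apply]
    map_mul' := fun a b => by
      apply LinearMap.ext
      intro x
      apply Subtype.ext
      simp [LinearMap.restrict_coe_apply, map_mul, Module.End.mul_apply] }

theorem resRep_coe (σ : Representation ℂ H X) (p : Submodule ℂ X)
    (hp : ∀ h : H, ∀ x ∈ p, σ h x ∈ p) (h : H) (x : p) :
    ((resRep σ p hp h x : p) : X) = σ h (x : X) := rfl

theorem resRep_irred [FiniteDimensional ℂ X] (σ : Representation ℂ H X)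
    (p : Submodule ℂ X) (hp : ∀ h : H, ∀ x ∈ p, σ h x ∈ p) (hp0 : p ≠ ⊥)
    (hmin : ∀ q : Submodule ℂ X, q ≤ p → q ≠ ⊥ → (∀ h : H, ∀ x ∈ q, σ h x ∈ q) → q = p) :
    IsIrredRep (resRep σ p hp) := by
  constructor
  · exact Submodule.nontrivial_iff_ne_bot.mpr hp0
  · intro q hq
    by_cases hq0 : q = ⊥
    · exact Or.inl hq0
    · right
      set q' : Submodule ℂ X := q.map p.subtype with hq'
      have hq'le : q' ≤ p := Submodule.map_subtype_le p q
      have hq'0 : q' ≠ ⊥ := by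
        obtain ⟨x, hxq, hx0⟩ := (Submodule.ne_bot_iff q).mp hq0
        refine (Submodule.ne_bot_iff q').mpr ⟨(x : X), Submodule.mem_map_of_mem hxq, ?_⟩
        simpa using hx0
      have hq'inv : ∀ h : H, ∀ x ∈ q', σ h x ∈ q' := by
        intro h x hx
        obtain ⟨v, hvq, rfl⟩ := hx
        exact ⟨resRep σ p hp h v, hq h v hvq, rfl⟩
      have heq := hmin q' hq'le hq'0 hq'inv
      rw [eq_top_iff]
      intro x _
      have hxp : (x : X) ∈ q' := by rw [heq]; exact x.2
      obtain ⟨v, hvq, hvx⟩ := hxp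
      have hvx' : v = x := Subtype.ext hvx
      exact hvx' ▸ hvq

end Exists

end HeisAux

open HeisAux

/-- Stone–von Neumann for finite Heisenberg-type groups (used in Propositions 7.2–7.3 and
Section 8).  Let `H` be a finite group, `Z ≤ Z(H)` central with `[H, H] ⊆ Z`, and
`χ : Z → ℂˣ` a character such that for every `x ∈ H ∖ Z` there is `y` with `χ([x,y]) ≠ 1`.
Then (i) there exists a finite-dimensional irreducible complex representation of `H` with
central character `χ` on `Z`; (ii) any two such are isomorphic; (iii) any such
representation `π` satisfies `(dim π)² = [H : Z]`. -/
theorem heisenberg_rep_exists_unique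
    {H : Type*} [Group H] [Finite H] (Z : Subgroup H)
    (hZ : Z ≤ Subgroup.center H)
    (hcomm : ∀ x y : H, ⁅x, y⁆ ∈ Z)
    (χ : Z →* ℂˣ)
    (hnd : ∀ x : H, x ∉ Z → ∃ y : H, χ ⟨⁅x, y⁆, hcomm x y⟩ ≠ 1) :
    (∃ π : CRep H, FiniteDimensional ℂ π.carrier ∧ IsIrredRep π.rep ∧
        ∀ z : Z, π.rep (z : H) = (χ z : ℂ) • LinearMap.id) ∧
    (∀ π π' : CRep H,
        FiniteDimensional ℂ π.carrier → IsIrredRep π.rep →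
        (∀ z : Z, π.rep (z : H) = (χ z : ℂ) • LinearMap.id) →
        FiniteDimensional ℂ π'.carrier → IsIrredRep π'.rep →
        (∀ z : Z, π'.rep (z : H) = (χ z : ℂ) • LinearMap.id) →
        RepIso π.rep π'.rep) ∧
    (∀ π : CRep H,
        FiniteDimensional ℂ π.carrier → IsIrredRep π.rep →
        (∀ z : Z, π.rep (z : H) = (χ z : ℂ) • LinearMap.id) →
        (Module.finrank ℂ π.carrier) ^ 2 = Z.index) := by
  classical
  refine ⟨?_, ?_, ?_⟩
  · -- existence
    obtain ⟨n, ⟨e⟩⟩ := Finite.exists_equiv_fin H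
    set σ : Representation ℂ H (Fin n → ℂ) :=
      { toFun := fun h =>
          { toFun := fun f i => f (e (e.symm i * h))
            map_add' := fun f g => rfl
            map_smul' := fun c f => rfl }
        map_one' := by
          apply LinearMap.ext
          intro f
          funext i
          show f (e (e.symm i * 1)) = f i
          simp
        map_mul' := fun a b => by
          apply LinearMap.ext
          intro f
          funext i
          show f (e (e.symm i * (a * b))) = f (e (e.symm (e (e.symm i * a)) * b))
          simp [mul_assoc] } with hσ
    have hσapp : ∀ (h : H) (f : Fin n → ℂ) (i : Fin n),
        σ h f i = f (e (e.symm i * h)) := fun _ _ _ => rfl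
    set U : Submodule ℂ (Fin n → ℂ) :=
      { carrier := {f | ∀ (z : Z) (t : H), f (e (t * z)) = (χ z : ℂ) * f (e t)}
        add_mem' := by
          intro f g hf hg z t
          show (f + g) (e (t * z)) = (χ z : ℂ) * (f + g) (e t)
          simp only [Pi.add_apply, hf z t, hg z t]
          ring
        zero_mem' := by
          intro z t
          simp
        smul_mem' := by
          intro c f hf z t
          show (c • f) (e (t * z)) = (χ z : ℂ) * (c • f) (e t)
          simp only [Pi.smul_apply, smul_eq_mul, hf z t]
          ring } with hU
    have hUmem : ∀ f : Fin n → ℂ,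
        f ∈ U ↔ ∀ (z : Z) (t : H), f (e (t * z)) = (χ z : ℂ) * f (e t) := fun f => Iff.rfl
    have hUinv : ∀ h : H, ∀ f ∈ U, σ h f ∈ U := by
      intro h f hf
      rw [hUmem] at hf ⊢
      intro z t
      have hc : (z : H) * h = h * (z : H) := (Subgroup.mem_center_iff.mp (hZ z.2) h).symm
      have h1 : σ h f (e (t * z)) = f (e ((t * h) * z)) := by
        rw [hσapp]
        congr 2
        rw [Equiv.symm_apply_apply, mul_assoc, hc, ← mul_assoc]
      have h2 : σ h f (e t) = f (e (t * h)) := by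
        rw [hσapp]
        congr 2
        rw [Equiv.symm_apply_apply]
      rw [h1, h2, hf z (t * h)]
    have hU0 : U ≠ ⊥ := by
      rw [Submodule.ne_bot_iff]
      refine ⟨fun i => if hmem : e.symm i ∈ Z then ((χ ⟨e.symm i, hmem⟩ : ℂˣ) : ℂ) else 0,
        ?_, ?_⟩
      · rw [hUmem]
        intro z t
        have ht1 : e.symm (e (t * z)) = t * z := Equiv.symm_apply_apply e _
        have ht2 : e.symm (e t) = t := Equiv.symm_apply_apply e _
        by_cases ht : t ∈ Z
        · have htz : t * (z : H) ∈ Z := Subgroup.mul_mem Z ht z.2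
          rw [dif_pos (show e.symm (e (t * (z : H))) ∈ Z by rw [ht1]; exact htz),
            dif_pos (show e.symm (e t) ∈ Z by rw [ht2]; exact ht)]
          have hmul : (⟨e.symm (e (t * z)), by rw [ht1]; exact htz⟩ : Z)
              = (⟨e.symm (e t), by rw [ht2]; exact ht⟩ : Z) * z := by
            apply Subtype.ext
            simp [ht1, ht2]
          rw [hmul, map_mul, Units.val_mul]
          ring
        · have htz : ¬ (t * (z : H) ∈ Z) := fun hc => ht ((Subgroup.mul_mem_cancel_right Z z.2).mp hc)
          rw [dif_neg (by rw [ht1]; exact htz), dif_neg (by rw [ht2]; exact ht), mul_zero]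
      · intro hzero
        have h1 := congrFun hzero (e 1)
        have h2 : e.symm (e (1 : H)) ∈ Z := by
          rw [Equiv.symm_apply_apply]
          exact Subgroup.one_mem Z
        rw [dif_pos h2] at h1
        have h3 : (⟨e.symm (e (1 : H)), h2⟩ : Z) = 1 := by
          apply Subtype.ext
          simp
        rw [h3, map_one] at h1
        simp at h1
    have hUchar : ∀ (z : Z), ∀ f ∈ U, σ (z : H) f = (χ z : ℂ) • f := by
      intro z f hf
      funext i
      rw [hσapp]
      have h1 := (hUmem f).mp hf z (e.symm i)
      rw [Equiv.apply_symm_apply] at h1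
      rw [h1]
      simp
    obtain ⟨p, hpU, hp0, hpinv, hmin⟩ := exists_min_invariant σ U hU0 hUinv
    refine ⟨⟨↥p, resRep σ p hpinv⟩, inferInstanceAs (FiniteDimensional ℂ ↥p),
      resRep_irred σ p hpinv hp0 hmin, ?_⟩
    intro z
    apply LinearMap.ext
    intro x
    apply Subtype.ext
    have h1 : ((resRep σ p hpinv (z : H) x : ↥p) : Fin n → ℂ) = σ (z : H) (x : Fin n → ℂ) :=
      rfl
    rw [h1, hUchar z (x : Fin n → ℂ) (hpU x.2)]
    simp
  · intro π π' hfd hirr hχ hfd' hirr' hχ'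
    haveI := hfd
    haveI := hfd'
    exact unique_main hcomm χ hZ hnd π.rep π'.rep hirr hirr' hχ hχ'
  · intro π hfd hirr hχ
    haveI := hfd
    exact dim_main hcomm χ hZ hnd π.rep hirr hχ
end

section
/- Let H be a finite group and Z ≤ Z(H) a central subgroup with [H, H] ⊆ Z, and let χ : Z → ℂˣ be a group homomorphism such that for every x ∈ H ∖ Z there exists y ∈ H with χ([x, y]) ≠ 1. Let π be an irreducible complex representation of H with π(z) = χ(z)·id for all z ∈ Z. Let L ≤ H be a subgroup with L ∩ Z ⊆ ker χ and |LZ/Z|² = [H : Z]. Then the space of L-fixed vectors π^L = {v : π(x)v = v for all x ∈ L} is one-dimensional. -/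
/-- The subspace of vectors fixed by every element of the subgroup `L`. -/
def fixedSubmodule {k H V : Type*} [Field k] [Group H] [AddCommGroup V] [Module k V]
    (ρ : Representation k H V) (L : Subgroup H) : Submodule k V where
  carrier := {v | ∀ x ∈ L, ρ x v = v}
  add_mem' := by
    intro a b ha hb x hx
    simp [map_add, ha x hx, hb x hx]
  zero_mem' := by intro x hx; simp
  smul_mem' := by
    intro c v hv x hx
    simp [map_smul, hv x hx]

open Module LinearMap

lemma mySchur {H : Type*} [Group H] {V : Type*} [AddCommGroup V] [Module ℂ V]
    [FiniteDimensional ℂ V] (ρ : Representation ℂ H V) (hirr : IsIrredRep ρ)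
    (T : V →ₗ[ℂ] V) (hT : ∀ g : H, ρ g ∘ₗ T = T ∘ₗ ρ g) : ∃ c : ℂ, T = c • LinearMap.id := by
  haveI := hirr.1
  obtain ⟨c, hc⟩ := Module.End.exists_eigenvalue T
  refine ⟨c, ?_⟩
  set K := LinearMap.ker (T - c • LinearMap.id) with hK
  have hKinv : ∀ g : H, ∀ v ∈ K, ρ g v ∈ K := by
    intro g v hv
    have hv' : T v - c • v = 0 := by
      simpa [hK, sub_eq_zero] using hv
    have hTg : T (ρ g v) = ρ g (T v) := by
      have := congrArg (fun f => f v) (hT g)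
      simpa using this.symm
    simp only [hK, LinearMap.mem_ker, LinearMap.sub_apply, LinearMap.smul_apply,
      LinearMap.id_apply, hTg]
    rw [← map_smul, ← map_sub, hv', map_zero]
  have hKne : K ≠ ⊥ := by
    obtain ⟨v, hv⟩ := hc.exists_hasEigenvector
    intro h
    apply hv.right
    have hvK : v ∈ K := by
      have := hv.apply_eq_smul
      simp [hK, sub_eq_zero, this]
    rw [h] at hvK
    simpa using hvK
  rcases hirr.2 K hKinv with h | h
  · exact absurd h hKne
  · have : T - c • LinearMap.id = 0 := LinearMap.ker_eq_top.mp h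
    exact sub_eq_zero.mp this

lemma myAverage {H : Type*} [Group H] [Fintype H] {V : Type*} [AddCommGroup V] [Module ℂ V]
    [FiniteDimensional ℂ V] (ρ : Representation ℂ H V) (hirr : IsIrredRep ρ)
    (A : V →ₗ[ℂ] V) :
    ∑ g : H, ρ g ∘ₗ A ∘ₗ ρ (g⁻¹) =
      ((Fintype.card H : ℂ) * LinearMap.trace ℂ V A / (finrank ℂ V : ℂ)) • LinearMap.id := by
  haveI := hirr.1
  set S : V →ₗ[ℂ] V := ∑ g : H, ρ g ∘ₗ A ∘ₗ ρ (g⁻¹) with hS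
  have hcomm : ∀ h : H, ρ h ∘ₗ S = S ∘ₗ ρ h := by
    intro h
    ext v
    have key : ∑ g : H, ρ (h * g) (A (ρ g⁻¹ v)) = ∑ g : H, ρ g (A (ρ (g⁻¹ * h) v)) := by
      refine Fintype.sum_equiv (Equiv.mulLeft h) _ _ ?_
      intro g
      simp only [Equiv.coe_mulLeft]
      congr 1
      congr 1
      rw [show (h * g)⁻¹ * h = g⁻¹ by group]
    calc (ρ h ∘ₗ S) v = ∑ g : H, ρ (h * g) (A (ρ g⁻¹ v)) := by
          simp [hS, LinearMap.sum_apply, map_sum, map_mul, Module.End.mul_apply]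
      _ = ∑ g : H, ρ g (A (ρ (g⁻¹ * h) v)) := key
      _ = (S ∘ₗ ρ h) v := by
          simp [hS, LinearMap.sum_apply, map_mul, Module.End.mul_apply]
  obtain ⟨c, hc⟩ := mySchur ρ hirr S hcomm
  have htr : LinearMap.trace ℂ V S = (Fintype.card H : ℂ) * LinearMap.trace ℂ V A := by
    rw [hS, map_sum]
    have h1 : ∀ g : H, LinearMap.trace ℂ V (ρ g ∘ₗ A ∘ₗ ρ g⁻¹) = LinearMap.trace ℂ V A := by
      intro g
      rw [LinearMap.trace_comp_comm', LinearMap.comp_assoc, ← Module.End.mul_eq_comp (ρ g⁻¹),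
        ← map_mul, inv_mul_cancel, map_one]
      simp [Module.End.one_eq_id]
    simp [h1, Finset.sum_const, mul_comm]
  have hd : (finrank ℂ V : ℂ) ≠ 0 := by
    have := Module.finrank_pos (R := ℂ) (M := V)
    exact_mod_cast this.ne'
  have hcval : c = (Fintype.card H : ℂ) * LinearMap.trace ℂ V A / (finrank ℂ V : ℂ) := by
    have h2 : LinearMap.trace ℂ V S = c * (finrank ℂ V : ℂ) := by
      rw [hc]
      simp [LinearMap.trace_id]
    field_simp
    rw [← htr, h2]
  rw [hc, hcval]

lemma myOrth {H : Type*} [Group H] [Fintype H] {V : Type*} [AddCommGroup V] [Module ℂ V]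
    [FiniteDimensional ℂ V] (ρ : Representation ℂ H V) (hirr : IsIrredRep ρ) :
    ∑ g : H, LinearMap.trace ℂ V (ρ g) * LinearMap.trace ℂ V (ρ g⁻¹) = (Fintype.card H : ℂ) := by
  haveI := hirr.1
  set d := finrank ℂ V with hd
  have hd0 : (d : ℂ) ≠ 0 := by
    have := Module.finrank_pos (R := ℂ) (M := V)
    exact_mod_cast this.ne'
  let b : Basis (Fin d) ℂ V := Module.finBasis ℂ V
  set M : H → Matrix (Fin d) (Fin d) ℂ := fun g => LinearMap.toMatrix b b (ρ g) with hM
  have htr : ∀ g : H, LinearMap.trace ℂ V (ρ g) = (M g).trace := by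
    intro g
    rw [LinearMap.trace_eq_matrix_trace ℂ b]
  have key : ∀ i j : Fin d, ∑ g : H, (M g) i i * (M g⁻¹) j j =
      if i = j then (Fintype.card H : ℂ) / d else 0 := by
    intro i j
    have hA := myAverage ρ hirr (Matrix.toLin b b (Matrix.single i j 1))
    have hmat := congrArg (LinearMap.toMatrix b b) hA
    rw [map_sum] at hmat
    have hterm : ∀ g : H, LinearMap.toMatrix b b
        (ρ g ∘ₗ Matrix.toLin b b (Matrix.single i j 1) ∘ₗ ρ g⁻¹) =
        M g * Matrix.single i j 1 * M g⁻¹ := by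
      intro g
      rw [LinearMap.toMatrix_comp b b b, LinearMap.toMatrix_comp b b b,
        LinearMap.toMatrix_toLin, hM, Matrix.mul_assoc]
    simp only [hterm] at hmat
    have htrA : LinearMap.trace ℂ V (Matrix.toLin b b (Matrix.single i j 1)) =
        if i = j then (1 : ℂ) else 0 := by
      rw [LinearMap.trace_eq_matrix_trace ℂ b, LinearMap.toMatrix_toLin]
      by_cases h : i = j
      · subst h
        simp [Matrix.trace_single_eq_same]
      · rw [Matrix.trace_single_eq_of_ne i j 1 h]
        simp [h]
    have hentry := congrFun (congrFun hmat i) j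
    rw [Matrix.sum_apply] at hentry
    have hleft : ∀ g : H, (M g * Matrix.single i j 1 * M g⁻¹ : Matrix (Fin d) (Fin d) ℂ) i j =
        (M g) i i * (M g⁻¹) j j := by
      intro g
      rw [Matrix.mul_apply, Finset.sum_eq_single j (fun b _ hb => by simp [hb]) (by simp)]
      simp
    simp only [hleft] at hentry
    rw [hentry, htrA, map_smul, LinearMap.toMatrix_id]
    by_cases h : i = j <;>
      simp [h, hd, Matrix.smul_apply, Matrix.one_apply, div_eq_mul_inv, mul_comm]
  calc ∑ g : H, LinearMap.trace ℂ V (ρ g) * LinearMap.trace ℂ V (ρ g⁻¹)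
      = ∑ g : H, ∑ i : Fin d, ∑ j : Fin d, (M g) i i * (M g⁻¹) j j := by
        refine Finset.sum_congr rfl fun g _ => ?_
        rw [htr, htr, Matrix.trace, Matrix.trace, Finset.sum_mul_sum]
        rfl
    _ = ∑ i : Fin d, ∑ j : Fin d, ∑ g : H, (M g) i i * (M g⁻¹) j j := by
        rw [Finset.sum_comm]
        refine Finset.sum_congr rfl fun i _ => Finset.sum_comm
    _ = ∑ i : Fin d, ∑ j : Fin d, if i = j then (Fintype.card H : ℂ) / d else 0 := by
        simp [key]
    _ = (Fintype.card H : ℂ) := by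
        simp [Finset.sum_ite_eq', Finset.mem_univ, div_eq_mul_inv]
        field_simp

open scoped commutatorElement

/-- (Used in the proof of Proposition 8.5.)  Let `H` be a finite group, `Z ≤ Z(H)` with
`[H, H] ⊆ Z`, and `χ : Z → ℂˣ` nondegenerate in the sense that every `x ∉ Z` has some `y`
with `χ([x,y]) ≠ 1`.  Let `π` be an irreducible complex representation of `H` with central
character `χ` on `Z`, and `L ≤ H` a subgroup with `L ∩ Z ⊆ ker χ` and
`|LZ/Z|² = [H : Z]` (a Lagrangian).  Then the space of `L`-fixed vectors is
one-dimensional. -/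
theorem lagrangian_fixed_vectors_one_dimensional
    {H : Type*} [Group H] [Finite H] (Z : Subgroup H)
    (hZ : Z ≤ Subgroup.center H)
    (hcomm : ∀ x y : H, ⁅x, y⁆ ∈ Z)
    (χ : Z →* ℂˣ)
    (hnd : ∀ x : H, x ∉ Z → ∃ y : H, χ ⟨⁅x, y⁆, hcomm x y⟩ ≠ 1)
    {V : Type*} [AddCommGroup V] [Module ℂ V] [FiniteDimensional ℂ V]
    (ρ : Representation ℂ H V) (hirr : IsIrredRep ρ)
    (hcentral : ∀ z : Z, ρ (z : H) = (χ z : ℂ) • LinearMap.id)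
    (L : Subgroup H)
    (hLZ : ∀ (x : H) (_ : x ∈ L) (hz : x ∈ Z), χ ⟨x, hz⟩ = 1)
    (hLag : (Subgroup.relIndex Z (L ⊔ Z)) ^ 2 = Z.index) :
    Module.finrank ℂ (fixedSubmodule ρ L) = 1 := by
  classical
  haveI : Fintype H := Fintype.ofFinite H
  haveI := hirr.1
  set d := finrank ℂ V with hd
  have hdpos : 0 < d := Module.finrank_pos
  have hd0 : (d : ℂ) ≠ 0 := by exact_mod_cast hdpos.ne'
  -- Step A: trace vanishes off Z
  have htr0 : ∀ x : H, x ∉ Z → LinearMap.trace ℂ V (ρ x) = 0 := by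
    intro x hx
    obtain ⟨y, hy⟩ := hnd x hx
    have hu : (⁅y, x⁆ : H) ∈ Z := hcomm y x
    have hrel : (⁅y, x⁆ : H) * x = y * x * y⁻¹ := by group
    have h1 : LinearMap.trace ℂ V (ρ (y * x * y⁻¹)) = LinearMap.trace ℂ V (ρ x) := by
      rw [map_mul ρ, map_mul ρ, LinearMap.trace_mul_comm, ← mul_assoc, ← map_mul ρ,
        inv_mul_cancel, map_one]
      simp [← Module.End.one_eq_id]
    have h2 : LinearMap.trace ℂ V (ρ (⁅y, x⁆ * x)) =
        (χ ⟨⁅y, x⁆, hu⟩ : ℂ) * LinearMap.trace ℂ V (ρ x) := by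
      rw [map_mul, hcentral ⟨⁅y, x⁆, hu⟩, smul_mul_assoc, map_smul]
      simp [smul_eq_mul, ← Module.End.one_eq_id]
    have hchi : (χ ⟨⁅y, x⁆, hu⟩ : ℂ) ≠ 1 := by
      have hinv : (⟨⁅y, x⁆, hu⟩ : Z) = (⟨⁅x, y⁆, hcomm x y⟩ : Z)⁻¹ := by
        ext
        simp only [InvMemClass.coe_inv]
        group
      intro hone
      apply hy
      have : χ ⟨⁅y, x⁆, hu⟩ = 1 := Units.ext (by simpa using hone)
      rw [hinv, map_inv] at this
      simpa using inv_eq_one.mp this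
    have heq : (χ ⟨⁅y, x⁆, hu⟩ : ℂ) * LinearMap.trace ℂ V (ρ x) = LinearMap.trace ℂ V (ρ x) := by
      rw [← h2, hrel, h1]
    by_contra h0
    have : (χ ⟨⁅y, x⁆, hu⟩ : ℂ) * LinearMap.trace ℂ V (ρ x) =
        1 * LinearMap.trace ℂ V (ρ x) := by rw [one_mul, heq]
    exact hchi (mul_right_cancel₀ h0 this)
  -- Step B: trace on Z
  have htrZ : ∀ (z : H) (hz : z ∈ Z), LinearMap.trace ℂ V (ρ z) = (χ ⟨z, hz⟩ : ℂ) * d := by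
    intro z hz
    rw [hcentral ⟨z, hz⟩, map_smul]
    simp [smul_eq_mul, LinearMap.trace_id, hd]
  -- Step C: d ^ 2 = [H : Z]
  have horth := myOrth ρ hirr
  have hsum : ∑ g : H, LinearMap.trace ℂ V (ρ g) * LinearMap.trace ℂ V (ρ g⁻¹) =
      ∑ g : H, if g ∈ Z then ((d : ℂ)) ^ 2 else 0 := by
    refine Finset.sum_congr rfl fun g _ => ?_
    by_cases hg : g ∈ Z
    · have hg' : g⁻¹ ∈ Z := inv_mem hg
      rw [htrZ g hg, htrZ g⁻¹ hg', if_pos hg]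
      have : (⟨g⁻¹, hg'⟩ : Z) = (⟨g, hg⟩ : Z)⁻¹ := rfl
      rw [this, map_inv]
      have hu : ((χ ⟨g, hg⟩ : ℂˣ) : ℂ) * (((χ ⟨g, hg⟩)⁻¹ : ℂˣ) : ℂ) = 1 := by
        rw [← Units.val_mul, mul_inv_cancel, Units.val_one]
      calc (χ ⟨g, hg⟩ : ℂ) * d * ((((χ ⟨g, hg⟩)⁻¹ : ℂˣ) : ℂ) * d)
          = ((χ ⟨g, hg⟩ : ℂ) * (((χ ⟨g, hg⟩)⁻¹ : ℂˣ) : ℂ)) * (d * d) := by ring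
        _ = (d : ℂ) ^ 2 := by rw [hu, one_mul]; ring
    · rw [htr0 g hg, if_neg hg, zero_mul]
  have hcardZ : ∑ g : H, (if g ∈ Z then ((d : ℂ)) ^ 2 else 0) =
      (Nat.card Z : ℂ) * (d : ℂ) ^ 2 := by
    rw [← Finset.sum_filter, Finset.sum_const, nsmul_eq_mul]
    congr 2
    rw [Nat.card_eq_fintype_card, Fintype.card_subtype]
  have hZne : (Nat.card Z : ℂ) ≠ 0 := by
    have : 0 < Nat.card Z := Nat.card_pos
    exact_mod_cast this.ne'
  have hHcard : (Nat.card H : ℂ) = (Nat.card Z : ℂ) * (d : ℂ) ^ 2 := by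
    rw [← hcardZ, ← hsum, horth, Nat.card_eq_fintype_card]
  have hindex : Z.index * Nat.card Z = Nat.card H := Subgroup.index_mul_card Z
  have hd2 : d ^ 2 = Z.index := by
    have : ((d ^ 2 : ℕ) : ℂ) = ((Z.index : ℕ) : ℂ) := by
      push_cast
      have h1 : (Nat.card Z : ℂ) * (d : ℂ) ^ 2 = (Nat.card Z : ℂ) * (Z.index : ℂ) := by
        rw [← hHcard, ← hindex]
        push_cast
        ring
      exact mul_left_cancel₀ hZne h1
    exact_mod_cast this
  -- Step D: Lagrangian count
  haveI hZnormal : Z.Normal := by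
    constructor
    intro n hn g
    have hcen := Subgroup.mem_center_iff.mp (hZ hn)
    rw [hcen g, mul_assoc, mul_inv_cancel, mul_one]
    exact hn
  have hrelL : Z.relIndex (L ⊔ Z) = (Z.subgroupOf L).index := by
    rw [Subgroup.relIndex_sup_right]
    rfl
  have hmd : (Z.subgroupOf L).index = d := by
    have h1 : (Z.subgroupOf L).index ^ 2 = d ^ 2 := by rw [← hrelL, hLag, hd2]
    exact Nat.pow_left_injective (by norm_num) h1
  have hLcard : Nat.card L = d * Nat.card (Z.subgroupOf L) := by
    rw [← hmd]
    exact (Subgroup.index_mul_card (Z.subgroupOf L)).symm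
  -- Step E: the averaging projection onto the fixed subspace
  haveI : Fintype L := Fintype.ofFinite L
  set P : V →ₗ[ℂ] V := (Fintype.card L : ℂ)⁻¹ • ∑ x : L, ρ (x : H) with hP
  have hcardL0 : (Fintype.card L : ℂ) ≠ 0 := by
    have : 0 < Fintype.card L := Fintype.card_pos
    exact_mod_cast this.ne'
  have hProj : LinearMap.IsProj (fixedSubmodule ρ L) P := by
    constructor
    · intro v
      intro x hx
      have key : ∑ y : L, ρ x (ρ (y : H) v) = ∑ y : L, ρ (y : H) v := by
        refine Fintype.sum_equiv (Equiv.mulLeft (⟨x, hx⟩ : L)) _ _ ?_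
        intro y
        simp only [Equiv.coe_mulLeft, Subgroup.coe_mul, map_mul ρ]
        rfl
      simp only [hP, LinearMap.smul_apply, LinearMap.sum_apply, map_smul, map_sum]
      rw [key]
    · intro v hv
      have hv' : ∀ x ∈ L, ρ x v = v := hv
      simp only [hP, LinearMap.smul_apply, LinearMap.sum_apply]
      have : ∑ y : L, ρ (y : H) v = (Fintype.card L : ℂ) • v := by
        have h1 : ∀ y : L, ρ (y : H) v = v := fun y => hv' y.1 y.2
        simp only [h1]
        rw [Finset.sum_const, Finset.card_univ, ← Nat.cast_smul_eq_nsmul ℂ]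
      rw [this, smul_smul, inv_mul_cancel₀ hcardL0, one_smul]
  have htrP : LinearMap.trace ℂ V P = (finrank ℂ (fixedSubmodule ρ L) : ℂ) := hProj.trace
  -- compute the trace of P
  have hsumL : ∑ x : L, LinearMap.trace ℂ V (ρ (x : H)) =
      (Nat.card (Z.subgroupOf L) : ℂ) * d := by
    have hterm : ∀ x : L, LinearMap.trace ℂ V (ρ (x : H)) =
        if (x : H) ∈ Z then (d : ℂ) else 0 := by
      intro x
      by_cases hxZ : (x : H) ∈ Z
      · rw [htrZ _ hxZ, hLZ (x : H) x.2 hxZ, if_pos hxZ]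
        simp
      · rw [htr0 _ hxZ, if_neg hxZ]
    rw [Finset.sum_congr rfl fun x _ => hterm x, ← Finset.sum_filter, Finset.sum_const,
      nsmul_eq_mul]
    congr 2
    rw [Nat.card_eq_fintype_card, ← Fintype.card_subtype]
    exact Fintype.card_congr (Equiv.subtypeEquivRight fun x => Subgroup.mem_subgroupOf)
  have htrPval : LinearMap.trace ℂ V P = 1 := by
    rw [hP, map_smul, map_sum, smul_eq_mul, hsumL]
    have hLc : (Fintype.card L : ℂ) = (d : ℂ) * (Nat.card (Z.subgroupOf L) : ℂ) := by
      rw [← Nat.card_eq_fintype_card, hLcard]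
      push_cast
      ring
    have hZL0 : (Nat.card (Z.subgroupOf L) : ℂ) ≠ 0 := by
      have : 0 < Nat.card (Z.subgroupOf L) := Nat.card_pos
      exact_mod_cast this.ne'
    rw [hLc]
    field_simp
  have : (finrank ℂ (fixedSubmodule ρ L) : ℂ) = ((1 : ℕ) : ℂ) := by
    rw [← htrP, htrPval]
    norm_num
  exact_mod_cast this
end

section
/- Let N be a finite group and φ an automorphism of N. Suppose there is a chain of φ-stable normal subgroups N = N₁ ⊇ N₂ ⊇ ⋯ ⊇ N_m ⊇ N_{m+1} = {1} of N such that for every 1 ≤ i ≤ m and every n ∈ N_i there exists x ∈ N_i with n⁻¹·φ(x)·x⁻¹ ∈ N_{i+1}. Then N is generated by the set {φ(x)·x⁻¹ : x ∈ N}. -/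
/-- Lemma 8.4, abstract form.  Let `N` be a finite group and `φ` an automorphism of `N`.
Suppose there is a chain of `φ`-stable normal subgroups
`N = N₁ ⊇ N₂ ⊇ ⋯ ⊇ N_m ⊇ N_{m+1} = {1}` such that for every `1 ≤ i ≤ m` and every
`n ∈ N_i` there is `x ∈ N_i` with `n⁻¹·φ(x)·x⁻¹ ∈ N_{i+1}` (i.e. `x ↦ φ(x)x⁻¹` is
surjective on each successive quotient).  Then `N` is generated by
`{φ(x)·x⁻¹ : x ∈ N}`. -/
theorem generated_by_twisted_commutators
    {N : Type*} [Group N] [Finite N] (φ : N ≃* N)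
    (m : ℕ) (Nc : ℕ → Subgroup N)
    (hfirst : Nc 1 = ⊤)
    (hlast : Nc (m + 1) = ⊥)
    (hdesc : ∀ i : ℕ, 1 ≤ i → i ≤ m → Nc (i + 1) ≤ Nc i)
    (hnormal : ∀ i : ℕ, (Nc i).Normal)
    (hstable : ∀ i : ℕ, ∀ x ∈ Nc i, φ x ∈ Nc i)
    (hsurj : ∀ i : ℕ, 1 ≤ i → i ≤ m → ∀ n ∈ Nc i, ∃ x ∈ Nc i,
      n⁻¹ * φ x * x⁻¹ ∈ Nc (i + 1)) :
    Subgroup.closure {y : N | ∃ x : N, y = φ x * x⁻¹} = ⊤ := by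
  set H := Subgroup.closure {y : N | ∃ x : N, y = φ x * x⁻¹} with hH
  have key : ∀ k, k ≤ m → Nc (m + 1 - k) ≤ H := by
    intro k
    induction k with
    | zero => intro _; simpa [hlast] using bot_le
    | succ k ih =>
      intro hk
      have hkm : k ≤ m := Nat.le_of_succ_le hk
      have ih' := ih hkm
      have hi1 : 1 ≤ m - k := by omega
      have hi2 : m - k ≤ m := by omega
      have heq : m + 1 - (k + 1) = m - k := by omega
      have heq2 : m + 1 - k = (m - k) + 1 := by omega
      rw [heq]
      rw [heq2] at ih'
      intro n hn
      obtain ⟨x, hx, ht⟩ := hsurj (m - k) hi1 hi2 n hn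
      have h1 : φ x * x⁻¹ ∈ H := Subgroup.subset_closure ⟨x, rfl⟩
      have h2 : (n⁻¹ * φ x * x⁻¹)⁻¹ ∈ H := H.inv_mem (ih' ht)
      have : (φ x * x⁻¹) * (n⁻¹ * φ x * x⁻¹)⁻¹ = n := by group
      rw [← this]
      exact H.mul_mem h1 h2
  have := key m le_rfl
  rw [show m + 1 - m = 1 by omega, hfirst] at this
  exact top_le_iff.mp this
end
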